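/- arXiv:math/0206018 — 6 statements merged into one kernel-verified Lean document; each statement's English description precedes it below -/
import Mathlib

section
/- Let w be a positive real number. Then lim_{x→0} ( ζ(1+x) + w^{−x} ζ(1−x) ) = 2γ + log w, where the limit is taken over nonzero complex x tending to 0 (so that the singularities of the two zeta factors at x = 0 cancel). -/
open Filter Topology

/-! Subtracting the principal parts `±1/x` of the two poles, the sum splits as
`(ζ(1+x) - 1/x) + w^{-x} (ζ(1-x) + 1/x) + (1 - w^{-x})/x`. The first two brackets tend to `γ`
by the Laurent expansion `ζ(s) = 1/(s-1) + γ + O(s-1)`, and the last term is a difference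
quotient of `x ↦ w^{-x}` at `0`, tending to `log w`. -/

lemma tendsto_riemannZeta_one_add_sub_inv :
    Tendsto (fun x : ℂ => riemannZeta (1 + x) - x⁻¹) (𝓝[≠] 0)
      (𝓝 (Real.eulerMascheroniConstant : ℂ)) := by
  have hshift : Tendsto (fun x : ℂ => 1 + x) (𝓝[≠] 0) (𝓝[≠] 1) := by
    simpa using (tendsto_map (f := fun x : ℂ => 1 + x) (x := 𝓝[≠] 0))
  refine (tendsto_riemannZeta_sub_one_div.comp hshift).congr fun x => ?_
  simp

lemma tendsto_riemannZeta_one_sub_add_inv :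
    Tendsto (fun x : ℂ => riemannZeta (1 - x) + x⁻¹) (𝓝[≠] 0)
      (𝓝 (Real.eulerMascheroniConstant : ℂ)) := by
  have hreflect : Tendsto (fun x : ℂ => 1 - x) (𝓝[≠] 0) (𝓝[≠] 1) := by
    simpa using (tendsto_map (f := fun x : ℂ => 1 - x) (x := 𝓝[≠] 0))
  refine (tendsto_riemannZeta_sub_one_div.comp hreflect).congr fun x => ?_
  simp [sub_eq_add_neg]

lemma tendsto_one_sub_exp_neg_mul_div (c : ℂ) :
    Tendsto (fun x : ℂ => (1 - Complex.exp (-x * c)) / x) (𝓝[≠] 0) (𝓝 c) := by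
  have hderiv : HasDerivAt (fun x : ℂ => Complex.exp (-x * c)) (-c) 0 := by
    simpa using ((hasDerivAt_id (0 : ℂ)).neg.mul_const c).cexp
  have hslope := hderiv.tendsto_slope_zero.neg
  rw [neg_neg] at hslope
  refine hslope.congr fun x => ?_
  simp only [zero_add, neg_zero, zero_mul, Complex.exp_zero, smul_eq_mul]
  ring

theorem zeta_pole_cancellation_general (w : ℝ) :
    Tendsto (fun x : ℂ =>
        riemannZeta (1 + x) + Complex.exp (-x * (Real.log w : ℂ)) * riemannZeta (1 - x))
      (nhdsWithin 0 {(0 : ℂ)}ᶜ)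
      (nhds ((2 * Real.eulerMascheroniConstant + Real.log w : ℝ) : ℂ)) := by
  have hexp : Tendsto (fun x : ℂ => Complex.exp (-x * (Real.log w : ℂ))) (𝓝[≠] 0) (𝓝 1) := by
    refine tendsto_nhdsWithin_of_tendsto_nhds ?_
    simpa using (Continuous.tendsto (by fun_prop) 0 :
      Tendsto (fun x : ℂ => Complex.exp (-x * (Real.log w : ℂ))) (𝓝 0) _)
  have hsplit := (tendsto_riemannZeta_one_add_sub_inv.add
    (hexp.mul tendsto_riemannZeta_one_sub_add_inv)).add
      (tendsto_one_sub_exp_neg_mul_div (Real.log w))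
  convert hsplit using 2 with x
  · ring
  · push_cast
    ring

/-- **Cancellation of the zeta poles:** for `w > 0`,
`ζ(1+x) + w^{−x} ζ(1−x) → 2γ + log w` as `x → 0` through nonzero complex values. -/
theorem zeta_pole_cancellation (w : ℝ) (hw : 0 < w) :
    Tendsto (fun x : ℂ =>
        riemannZeta (1 + x) + Complex.exp (-x * (Real.log w : ℂ)) * riemannZeta (1 - x))
      (nhdsWithin 0 {(0 : ℂ)}ᶜ)
      (nhds ((2 * Real.eulerMascheroniConstant + Real.log w : ℝ) : ℂ)) :=
  zeta_pole_cancellation_general w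
end

section
/- Let k ≥ 1 and r > 0. Suppose F(a_1,…,a_k) is a symmetric function of k complex variables, analytic on the closed polydisc {|a_j| ≤ r}, and suppose f(s) is analytic on {0 < |s| ≤ 2r} with a simple pole of residue 1 at s = 0. Set K(a_1,…,a_k) = F(a_1,…,a_k) · ∏_{1≤i≤j≤k} f(a_i + a_j). Let α_1,…,α_k be complex numbers with 0 < |α_j| < r such that the 2k numbers ±α_1,…,±α_k are pairwise distinct. Then ∑_{ε ∈ {−1,+1}^k} K(ε_1 α_1,…,ε_k α_k) = ((−1)^{k(k−1)/2} 2^k / k!) · (1/(2πi)^{k}) ∮_{|z_1|=r} ⋯ ∮_{|z_k|=r} K(z_1,…,z_k) · Δ(z_1^2,…,z_k^2)^2 · (∏_{j=1}^{k} z_j) / ∏_{i=1}^{k} ∏_{j=1}^{k} (z_i − α_j)(z_i + α_j) dz_1 ⋯ dz_k. -/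
open Finset

/-- The `n`-fold iterated contour integral over circles of radius `r` centered at `0`. -/
noncomputable def iteratedCircleIntegral : (n : ℕ) → ℝ → ((Fin n → ℂ) → ℂ) → ℂ
  | 0, _, f => f (fun i => i.elim0)
  | n + 1, r, f => ∮ z in C(0, r), iteratedCircleIntegral n r (fun w => f (Fin.cons z w))

/-- The Vandermonde determinant `Δ(z_1,…,z_n) = ∏_{i<j} (z_j − z_i)`. -/
noncomputable def vandermondeΔ {n : ℕ} (z : Fin n → ℂ) : ℂ :=
  ∏ p ∈ Finset.univ.filter (fun p : Fin n × Fin n => p.1 < p.2), (z p.2 - z p.1)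

section SSCAux
open Complex Metric Set

namespace SSC

lemma partial_fractions {ι : Type} [DecidableEq ι] (v : ι → ℂ)
    (hv : Function.Injective v) (s : Finset ι) (hne : s.Nonempty) :
    ∀ z : ℂ, (∀ m ∈ s, z ≠ v m) →
    (∏ m ∈ s, (z - v m))⁻¹
      = ∑ m ∈ s, (z - v m)⁻¹ * (∏ l ∈ s.erase m, (v m - v l))⁻¹ := by
  induction hne using Finset.Nonempty.cons_induction with
  | singleton a => intro z _; simp
  | cons a s ha hs ih =>
    intro z hz
    rw [Finset.cons_eq_insert] at *
    have hza : z ≠ v a := hz a (mem_insert_self a s)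
    have hzs : ∀ m ∈ s, z ≠ v m := fun m hm => hz m (mem_insert_of_mem hm)
    have hvas : ∀ m ∈ s, v a ≠ v m := fun m hm h => ha (by rwa [hv h])
    rw [Finset.prod_insert ha, Finset.sum_insert ha, mul_inv, ih z hzs,
      Finset.erase_insert ha, Finset.mul_sum]
    have key : ∀ m ∈ s,
        (z - v a)⁻¹ * ((z - v m)⁻¹ * (∏ l ∈ s.erase m, (v m - v l))⁻¹)
        = (z - v a)⁻¹ * ((v a - v m)⁻¹ * (∏ l ∈ s.erase m, (v m - v l))⁻¹)
          + (z - v m)⁻¹ * (∏ l ∈ (insert a s).erase m, (v m - v l))⁻¹ := by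
      intro m hm
      have hma : m ≠ a := fun h => ha (h ▸ hm)
      rw [Finset.erase_insert_of_ne hma.symm,
        Finset.prod_insert (fun h => ha (Finset.mem_of_mem_erase h))]
      have h1 : z - v a ≠ 0 := sub_ne_zero.2 hza
      have h2 : z - v m ≠ 0 := sub_ne_zero.2 (hzs m hm)
      have h3 : v a - v m ≠ 0 := sub_ne_zero.2 (hvas m hm)
      have h4 : v m - v a ≠ 0 := sub_ne_zero.2 fun h => (hvas m hm) h.symm
      have h5 : (∏ l ∈ s.erase m, (v m - v l)) ≠ 0 :=
        Finset.prod_ne_zero_iff.2 fun l hl => sub_ne_zero.2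
          (fun h => (Finset.ne_of_mem_erase hl) (hv h).symm)
      rw [mul_inv]
      field_simp
      ring
    rw [Finset.sum_congr rfl key, Finset.sum_add_distrib, ← Finset.mul_sum,
      ← ih (v a) hvas]

lemma circleIntegral_finset_sum {ι : Type} (s : Finset ι) (f : ι → ℂ → ℂ)
    {c : ℂ} {R : ℝ} (hf : ∀ i ∈ s, CircleIntegrable (f i) c R) :
    (∮ z in C(c, R), ∑ i ∈ s, f i z) = ∑ i ∈ s, ∮ z in C(c, R), f i z := by
  simp only [circleIntegral, Finset.smul_sum]
  exact intervalIntegral.integral_finset_sum (fun i hi => (hf i hi).out)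

lemma circle_residue_sum {ι : Type} [Fintype ι] [DecidableEq ι] [Nonempty ι]
    {r : ℝ} (hr : 0 < r) (A : ℂ → ℂ) (hA : DifferentiableOn ℂ A (closedBall 0 r))
    (v : ι → ℂ) (hv : Function.Injective v) (hvr : ∀ m, ‖v m‖ < r) :
    (∮ z in C(0, r), A z * (∏ m, (z - v m))⁻¹)
      = (2 * Real.pi * Complex.I) *
          ∑ m, A (v m) * (∏ l ∈ Finset.univ.erase m, (v m - v l))⁻¹ := by
  have hvb : ∀ m, v m ∈ ball (0:ℂ) r := by
    intro m; simpa [Complex.dist_eq] using hvr m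
  have hsph : ∀ z ∈ sphere (0:ℂ) r, ∀ m : ι, z ≠ v m := by
    intro z hz m h
    have : ‖z‖ = r := by simpa [Complex.dist_eq] using hz
    rw [h] at this; exact absurd this (ne_of_lt (hvr m))
  -- rewrite integrand via partial fractions
  have h1 : (∮ z in C(0, r), A z * (∏ m, (z - v m))⁻¹)
      = ∮ z in C(0, r), ∑ m : ι, (z - v m)⁻¹ •
          (A z * (∏ l ∈ Finset.univ.erase m, (v m - v l))⁻¹) := by
    refine circleIntegral.integral_congr hr.le fun z hz => ?_
    rw [partial_fractions v hv Finset.univ Finset.univ_nonempty z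
      (fun m _ => hsph z hz m), Finset.mul_sum]
    exact Finset.sum_congr rfl fun m _ => by simp [smul_eq_mul]; ring
  have hAc : ContinuousOn A (sphere (0:ℂ) r) :=
    hA.continuousOn.mono (sphere_subset_closedBall)
  have h2 : ∀ m : ι, CircleIntegrable (fun z => (z - v m)⁻¹ •
      (A z * (∏ l ∈ Finset.univ.erase m, (v m - v l))⁻¹)) 0 r := by
    intro m
    refine ContinuousOn.circleIntegrable hr.le ?_
    refine ContinuousOn.fun_smul ?_ (hAc.fun_mul continuousOn_const)
    exact ContinuousOn.inv₀ (continuousOn_id.sub continuousOn_const)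
      fun z hz => sub_ne_zero.2 (hsph z hz m)
  rw [h1, circleIntegral_finset_sum _ _ (fun m _ => h2 m)]
  rw [Finset.mul_sum]
  refine Finset.sum_congr rfl fun m _ => ?_
  have := (hA.fun_mul (differentiableOn_const
    ((∏ l ∈ Finset.univ.erase m, (v m - v l))⁻¹))).circleIntegral_sub_inv_smul (hvb m)
  rw [this, smul_eq_mul, mul_assoc]



noncomputable def Mleft (n : ℕ) : ℂ →L[ℂ] (Fin (n+1) → ℂ) :=
  ContinuousLinearMap.pi (fun i : Fin (n+1) =>
    (Fin.cases (ContinuousLinearMap.id ℂ ℂ) (fun _ => (0 : ℂ →L[ℂ] ℂ)) i))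

noncomputable def Mright (n : ℕ) : (Fin n → ℂ) →L[ℂ] (Fin (n+1) → ℂ) :=
  ContinuousLinearMap.pi (fun i : Fin (n+1) =>
    (Fin.cases (0 : (Fin n → ℂ) →L[ℂ] ℂ)
      (fun j => ContinuousLinearMap.proj j) i))

lemma cons_eq_left {n : ℕ} (w : Fin n → ℂ) :
    (fun z : ℂ => Fin.cons z w) = (fun z : ℂ => Mleft n z + Fin.cons 0 w) := by
  funext z i
  induction i using Fin.cases with
  | zero => simp [Mleft]
  | succ j => simp [Mleft]

lemma cons_analytic_left {n : ℕ} {r : ℝ} (A : (Fin (n+1) → ℂ) → ℂ)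
    (hA : AnalyticOnNhd ℂ A {z : Fin (n+1) → ℂ | ∀ i, ‖z i‖ ≤ r})
    (w : Fin n → ℂ) (hw : ∀ i, ‖w i‖ ≤ r) :
    AnalyticOnNhd ℂ (fun z => A (Fin.cons z w)) (closedBall 0 r) := by
  have h1 : AnalyticOnNhd ℂ (fun z : ℂ => Fin.cons z w : ℂ → (Fin (n+1) → ℂ))
      (closedBall 0 r) := by
    rw [cons_eq_left]
    exact ((Mleft n).analyticOnNhd (closedBall 0 r)).add analyticOnNhd_const
  refine hA.comp h1 ?_
  intro z hz
  simp only [Set.mem_setOf_eq]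
  intro i
  induction i using Fin.cases with
  | zero => simpa [Complex.dist_eq] using hz
  | succ j => simpa using hw j

lemma cons_eq_right {n : ℕ} (z : ℂ) :
    (fun w : Fin n → ℂ => Fin.cons z w)
      = (fun w : Fin n → ℂ => Mright n w + Fin.cons z (fun _ => (0:ℂ))) := by
  funext w i
  induction i using Fin.cases with
  | zero => simp [Mright]
  | succ j => simp [Mright]

lemma cons_analytic_right {n : ℕ} {r : ℝ} (A : (Fin (n+1) → ℂ) → ℂ)
    (hA : AnalyticOnNhd ℂ A {z : Fin (n+1) → ℂ | ∀ i, ‖z i‖ ≤ r})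
    (z : ℂ) (hz : ‖z‖ ≤ r) :
    AnalyticOnNhd ℂ (fun w => A (Fin.cons z w))
      {w : Fin n → ℂ | ∀ i, ‖w i‖ ≤ r} := by
  have h1 : AnalyticOnNhd ℂ (fun w : Fin n → ℂ => Fin.cons z w :
      (Fin n → ℂ) → (Fin (n+1) → ℂ)) {w : Fin n → ℂ | ∀ i, ‖w i‖ ≤ r} := by
    rw [cons_eq_right]
    exact ((Mright n).analyticOnNhd _).add analyticOnNhd_const
  refine hA.comp h1 ?_
  intro w hw
  simp only [Set.mem_setOf_eq] at hw ⊢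
  intro i
  induction i using Fin.cases with
  | zero => simpa using hz
  | succ j => simpa using hw j

lemma iterated_congr {r : ℝ} (hr : 0 < r) :
    ∀ (n : ℕ) (f g : (Fin n → ℂ) → ℂ),
    (∀ z : Fin n → ℂ, (∀ i, ‖z i‖ = r) → f z = g z) →
    iteratedCircleIntegral n r f = iteratedCircleIntegral n r g := by
  intro n
  induction n with
  | zero =>
    intro f g h
    exact h _ (fun i => i.elim0)
  | succ n ih =>
    intro f g h
    show (∮ z in C(0, r), iteratedCircleIntegral n r (fun w => f (Fin.cons z w)))
      = ∮ z in C(0, r), iteratedCircleIntegral n r (fun w => g (Fin.cons z w))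
    refine circleIntegral.integral_congr hr.le fun z hz => ?_
    have hza : ‖z‖ = r := by simpa [Complex.dist_eq] using hz
    refine ih _ _ fun w hw => h _ fun i => ?_
    induction i using Fin.cases with
    | zero => simpa using hza
    | succ j => simpa using hw j

lemma iterated_residue {ι : Type} [Fintype ι] [DecidableEq ι] [Nonempty ι]
    {r : ℝ} (hr : 0 < r) (v : ι → ℂ) (hv : Function.Injective v)
    (hvr : ∀ m, ‖v m‖ < r) :
    ∀ (n : ℕ) (A : (Fin n → ℂ) → ℂ),
      AnalyticOnNhd ℂ A {z : Fin n → ℂ | ∀ i, ‖z i‖ ≤ r} →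
    iteratedCircleIntegral n r (fun z => A z * ∏ i, (∏ m, (z i - v m))⁻¹)
      = (2 * Real.pi * Complex.I) ^ n *
          ∑ c : Fin n → ι, A (v ∘ c) *
            ∏ i, (∏ l ∈ Finset.univ.erase (c i), (v (c i) - v l))⁻¹ := by
  intro n
  induction n with
  | zero =>
    intro A hA
    show A (fun i => i.elim0) * _ = _
    rw [Fintype.sum_unique]
    simp only [Finset.univ_eq_empty, Finset.prod_empty, mul_one, pow_zero, one_mul]
    congr 1
    funext i
    exact i.elim0
  | succ n ih =>
    intro A hA
    have key : ∀ z ∈ sphere (0:ℂ) r,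
        iteratedCircleIntegral n r (fun w =>
          (fun z' => A z' * ∏ i, (∏ m, (z' i - v m))⁻¹) (Fin.cons z w))
        = (2 * Real.pi * Complex.I) ^ n *
            ((∑ c : Fin n → ι, A (Fin.cons z (v ∘ c)) *
              ∏ i, (∏ l ∈ Finset.univ.erase (c i), (v (c i) - v l))⁻¹) *
             (∏ m, (z - v m))⁻¹) := by
      intro z hz
      have hza : ‖z‖ = r := by simpa [Complex.dist_eq] using hz
      have heq : (fun w : Fin n → ℂ =>
          (fun z' => A z' * ∏ i, (∏ m, (z' i - v m))⁻¹) (Fin.cons z w))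
          = fun w : Fin n → ℂ =>
            (A (Fin.cons z w) * (∏ m, (z - v m))⁻¹) * ∏ i, (∏ m, (w i - v m))⁻¹ := by
        funext w
        simp only [Fin.prod_univ_succ, Fin.cons_zero, Fin.cons_succ]
        ring
      rw [heq, ih _ (((cons_analytic_right A hA z hza.le)).mul analyticOnNhd_const)]
      congr 1
      rw [Finset.sum_mul]
      refine Finset.sum_congr rfl fun c _ => ?_
      ring
    show (∮ z in C(0, r), iteratedCircleIntegral n r (fun w =>
        (fun z' => A z' * ∏ i, (∏ m, (z' i - v m))⁻¹) (Fin.cons z w))) = _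
    rw [circleIntegral.integral_congr hr.le (fun z hz => key z hz)]
    have hS : DifferentiableOn ℂ (fun z : ℂ => ∑ c : Fin n → ι,
        A (Fin.cons z (v ∘ c)) *
          ∏ i, (∏ l ∈ Finset.univ.erase (c i), (v (c i) - v l))⁻¹)
        (closedBall 0 r) := by
      refine DifferentiableOn.fun_sum fun c _ => DifferentiableOn.fun_mul ?_ (differentiableOn_const _)
      exact (cons_analytic_left A hA (v ∘ c) (fun i => (hvr (c i)).le)).differentiableOn
    have : (∮ z in C(0, r), (2 * Real.pi * Complex.I) ^ n *
        ((∑ c : Fin n → ι, A (Fin.cons z (v ∘ c)) *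
          ∏ i, (∏ l ∈ Finset.univ.erase (c i), (v (c i) - v l))⁻¹) *
         (∏ m, (z - v m))⁻¹))
        = (2 * Real.pi * Complex.I) ^ n * ((2 * Real.pi * Complex.I) *
            ∑ m, (∑ c : Fin n → ι, A (Fin.cons (v m) (v ∘ c)) *
              ∏ i, (∏ l ∈ Finset.univ.erase (c i), (v (c i) - v l))⁻¹) *
              (∏ l ∈ Finset.univ.erase m, (v m - v l))⁻¹) := by
      rw [circleIntegral.integral_const_mul]
      congr 1
      exact circle_residue_sum hr _ hS v hv hvr
    rw [this]
    -- reindex the (n+1)-fold sum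
    have hsum : ∑ c : Fin (n+1) → ι, A (v ∘ c) *
        ∏ i, (∏ l ∈ Finset.univ.erase (c i), (v (c i) - v l))⁻¹
        = ∑ m : ι, ∑ c : Fin n → ι,
            (A (Fin.cons (v m) (v ∘ c)) *
              ∏ i, (∏ l ∈ Finset.univ.erase (c i), (v (c i) - v l))⁻¹) *
            (∏ l ∈ Finset.univ.erase m, (v m - v l))⁻¹ := by
      rw [← Equiv.sum_comp (Fin.consEquiv (fun _ => ι)) (fun c => A (v ∘ c) *
        ∏ i, (∏ l ∈ Finset.univ.erase (c i), (v (c i) - v l))⁻¹), Fintype.sum_prod_type]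
      refine Finset.sum_congr rfl fun m _ => Finset.sum_congr rfl fun c _ => ?_
      have h1 : v ∘ (Fin.consEquiv (fun _ => ι) (m, c)) = Fin.cons (v m) (v ∘ c) := by
        funext i
        induction i using Fin.cases with
        | zero => simp [Fin.consEquiv]
        | succ j => simp [Fin.consEquiv]
      have h2 : ((Fin.consEquiv (fun _ => ι)) (m, c) : Fin (n+1) → ι)
          = Fin.cons m c := rfl
      rw [h1, h2, Fin.prod_univ_succ]
      simp only [Fin.cons_zero, Fin.cons_succ]
      ring
    have hsum2 : ∑ m : ι, (∑ c : Fin n → ι, A (Fin.cons (v m) (v ∘ c)) *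
          ∏ i, (∏ l ∈ Finset.univ.erase (c i), (v (c i) - v l))⁻¹) *
          (∏ l ∈ Finset.univ.erase m, (v m - v l))⁻¹
        = ∑ m : ι, ∑ c : Fin n → ι,
            (A (Fin.cons (v m) (v ∘ c)) *
              ∏ i, (∏ l ∈ Finset.univ.erase (c i), (v (c i) - v l))⁻¹) *
            (∏ l ∈ Finset.univ.erase m, (v m - v l))⁻¹ :=
      Finset.sum_congr rfl fun m _ => Finset.sum_mul _ _ _
    rw [hsum, pow_succ, hsum2]
    ring



lemma prod_pairs_perm_le {k : ℕ} (R : Fin k → Fin k → ℂ) (hR : ∀ i j, R i j = R j i)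
    (σ : Equiv.Perm (Fin k)) :
    ∏ p ∈ Finset.univ.filter (fun p : Fin k × Fin k => p.1 ≤ p.2), R (σ p.1) (σ p.2)
    = ∏ p ∈ Finset.univ.filter (fun p : Fin k × Fin k => p.1 ≤ p.2), R p.1 p.2 := by
  refine Finset.prod_nbij'
    (fun p => if σ p.1 ≤ σ p.2 then (σ p.1, σ p.2) else (σ p.2, σ p.1))
    (fun p => if σ⁻¹ p.1 ≤ σ⁻¹ p.2 then (σ⁻¹ p.1, σ⁻¹ p.2) else (σ⁻¹ p.2, σ⁻¹ p.1))
    ?_ ?_ ?_ ?_ ?_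
  · intro p _
    split_ifs with h
    · simpa using h
    · simpa using (le_of_not_ge h)
  · intro p _
    split_ifs with h
    · simpa using h
    · simpa using (le_of_not_ge h)
  · intro p hp
    have hple : p.1 ≤ p.2 := by simpa using hp
    split_ifs with h h1 h2
    · simp
    · exfalso; simp only [Equiv.Perm.inv_def, Equiv.symm_apply_apply] at h1; exact h1 hple
    · exfalso; simp only [Equiv.Perm.inv_def, Equiv.symm_apply_apply] at h2
      exact h (le_antisymm hple h2 ▸ le_refl _)
    · simp
  · intro p hp
    have hple : p.1 ≤ p.2 := by simpa using hp
    split_ifs with h h1 h2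
    · simp
    · exfalso; simp only [Equiv.Perm.inv_def, Equiv.apply_symm_apply] at h1; exact h1 hple
    · exfalso; simp only [Equiv.Perm.inv_def, Equiv.apply_symm_apply] at h2
      exact h (le_antisymm hple h2 ▸ le_refl _)
    · simp
  · intro p _
    split_ifs with h
    · rfl
    · exact hR _ _

lemma prod_pairs_perm_lt {k : ℕ} (R : Fin k → Fin k → ℂ) (hR : ∀ i j, R i j = R j i)
    (σ : Equiv.Perm (Fin k)) :
    ∏ p ∈ Finset.univ.filter (fun p : Fin k × Fin k => p.1 < p.2), R (σ p.1) (σ p.2)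
    = ∏ p ∈ Finset.univ.filter (fun p : Fin k × Fin k => p.1 < p.2), R p.1 p.2 := by
  refine Finset.prod_nbij'
    (fun p => if σ p.1 < σ p.2 then (σ p.1, σ p.2) else (σ p.2, σ p.1))
    (fun p => if σ⁻¹ p.1 < σ⁻¹ p.2 then (σ⁻¹ p.1, σ⁻¹ p.2) else (σ⁻¹ p.2, σ⁻¹ p.1))
    ?_ ?_ ?_ ?_ ?_
  · intro p hp
    have hplt : p.1 < p.2 := by simpa using hp
    have hne : σ p.1 ≠ σ p.2 := σ.injective.ne (ne_of_lt hplt)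
    split_ifs with h
    · simpa using h
    · simpa using lt_of_le_of_ne (le_of_not_gt h) (Ne.symm hne)
  · intro p hp
    have hplt : p.1 < p.2 := by simpa using hp
    have hne : σ⁻¹ p.1 ≠ σ⁻¹ p.2 := (Equiv.injective σ⁻¹).ne (ne_of_lt hplt)
    split_ifs with h
    · simpa using h
    · simpa using lt_of_le_of_ne (le_of_not_gt h) (Ne.symm hne)
  · intro p hp
    have hplt : p.1 < p.2 := by simpa using hp
    split_ifs with h h1 h2
    · simp
    · exfalso; simp only [Equiv.Perm.inv_def, Equiv.symm_apply_apply] at h1; exact h1 hplt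
    · exfalso; simp only [Equiv.Perm.inv_def, Equiv.symm_apply_apply] at h2
      exact absurd hplt (not_lt_of_gt h2)
    · simp
  · intro p hp
    have hplt : p.1 < p.2 := by simpa using hp
    split_ifs with h h1 h2
    · simp
    · exfalso; simp only [Equiv.Perm.inv_def, Equiv.apply_symm_apply] at h1; exact h1 hplt
    · exfalso; simp only [Equiv.Perm.inv_def, Equiv.apply_symm_apply] at h2
      exact absurd hplt (not_lt_of_gt h2)
    · simp
  · intro p _
    split_ifs with h
    · rfl
    · exact hR _ _

lemma vandermonde_sq_perm {k : ℕ} (w : Fin k → ℂ) (σ : Equiv.Perm (Fin k)) :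
    (vandermondeΔ (w ∘ σ)) ^ 2 = (vandermondeΔ w) ^ 2 := by
  unfold vandermondeΔ
  rw [← Finset.prod_pow, ← Finset.prod_pow]
  exact prod_pairs_perm_lt (fun i j => (w j - w i) ^ 2) (fun i j => by ring) σ




lemma filter_ne_eq_union {k : ℕ} :
    (Finset.univ.filter (fun p : Fin k × Fin k => p.1 ≠ p.2))
      = (Finset.univ.filter (fun p : Fin k × Fin k => p.1 < p.2))
        ∪ (Finset.univ.filter (fun p : Fin k × Fin k => p.2 < p.1)) := by
  ext p
  simp only [Finset.mem_filter, Finset.mem_union, Finset.mem_univ, true_and]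
  constructor
  · intro h; exact lt_or_gt_of_ne h
  · rintro (h | h)
    · exact ne_of_lt h
    · exact (ne_of_lt h).symm

lemma disj_lt_gt {k : ℕ} :
    Disjoint (Finset.univ.filter (fun p : Fin k × Fin k => p.1 < p.2))
      (Finset.univ.filter (fun p : Fin k × Fin k => p.2 < p.1)) := by
  rw [Finset.disjoint_left]
  intro p h1 h2
  simp only [Finset.mem_filter] at h1 h2
  exact absurd h1.2 (not_lt_of_gt h2.2)

lemma card_lt_eq_card_gt {k : ℕ} :
    (Finset.univ.filter (fun p : Fin k × Fin k => p.1 < p.2)).card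
      = (Finset.univ.filter (fun p : Fin k × Fin k => p.2 < p.1)).card := by
  refine Finset.card_nbij' (fun p => (p.2, p.1)) (fun p => (p.2, p.1)) ?_ ?_ ?_ ?_ <;>
    intro p hp <;> simp_all

lemma card_filter_lt {k : ℕ} :
    (Finset.univ.filter (fun p : Fin k × Fin k => p.1 < p.2)).card = k * (k - 1) / 2 := by
  have h1 : (Finset.univ : Finset (Fin k)).offDiag
      = Finset.univ.filter (fun p : Fin k × Fin k => p.1 ≠ p.2) := by
    ext p
    simp [Finset.mem_offDiag]
  have h2 := Finset.offDiag_card (Finset.univ : Finset (Fin k))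
  rw [h1, filter_ne_eq_union, Finset.card_union_of_disjoint disj_lt_gt,
    ← card_lt_eq_card_gt] at h2
  simp only [Finset.card_univ, Fintype.card_fin] at h2
  have hkk : k * k - k = k * (k - 1) := by
    rcases k with _ | n
    · rfl
    · simp only [Nat.succ_sub_one]
      have : (n + 1) * (n + 1) = (n+1) * n + (n+1) := by ring
      omega
  rw [hkk] at h2
  omega

lemma double_erase_prod_eq {k : ℕ} (g : Fin k → Fin k → ℂ) :
    ∏ j : Fin k, ∏ l ∈ Finset.univ.erase j, g j l
      = ∏ p ∈ Finset.univ.filter (fun p : Fin k × Fin k => p.1 ≠ p.2), g p.1 p.2 := by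
  rw [Finset.prod_filter, Fintype.prod_prod_type]
  refine Finset.prod_congr rfl fun j _ => ?_
  rw [← Finset.filter_ne Finset.univ j, Finset.prod_filter]

lemma off_diag_prod_eq {k : ℕ} (w : Fin k → ℂ) :
    ∏ j : Fin k, ∏ l ∈ Finset.univ.erase j, (w j - w l)
      = (-1 : ℂ) ^ (k * (k - 1) / 2) * (vandermondeΔ w) ^ 2 := by
  rw [double_erase_prod_eq, filter_ne_eq_union, Finset.prod_union disj_lt_gt]
  have h3 : ∏ p ∈ Finset.univ.filter (fun p : Fin k × Fin k => p.2 < p.1), (w p.1 - w p.2)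
      = ∏ p ∈ Finset.univ.filter (fun p : Fin k × Fin k => p.1 < p.2), (w p.2 - w p.1) := by
    refine Finset.prod_nbij' (fun p => (p.2, p.1)) (fun p => (p.2, p.1)) ?_ ?_ ?_ ?_ ?_ <;>
      intro p hp <;> simp_all
  rw [h3, ← Finset.prod_mul_distrib]
  unfold vandermondeΔ
  have h4 : ∀ p ∈ Finset.univ.filter (fun p : Fin k × Fin k => p.1 < p.2),
      (w p.1 - w p.2) * (w p.2 - w p.1) = (-1) * (w p.2 - w p.1) ^ 2 := by
    intro p _; ring
  rw [Finset.prod_congr rfl h4, Finset.prod_mul_distrib, Finset.prod_const,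
    card_filter_lt, ← Finset.prod_pow]



lemma analyticOnNhd_finset_prod {E : Type*} [NormedAddCommGroup E] [NormedSpace ℂ E]
    {ι : Type*} (s : Finset ι) (f : ι → E → ℂ) (S : Set E)
    (h : ∀ i ∈ s, AnalyticOnNhd ℂ (f i) S) :
    AnalyticOnNhd ℂ (fun x => ∏ i ∈ s, f i x) S := by
  classical
  induction s using Finset.induction with
  | empty => simpa using (analyticOnNhd_const : AnalyticOnNhd ℂ (fun _ => (1:ℂ)) S)
  | @insert a s ha ih =>
    have he : (fun x => ∏ i ∈ insert a s, f i x) = fun x => f a x * ∏ i ∈ s, f i x :=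
      funext fun x => Finset.prod_insert ha
    rw [he]
    exact (h a (Finset.mem_insert_self a s)).mul
      (ih fun i hi => h i (Finset.mem_insert_of_mem hi))

lemma erase_pair_eq {k : ℕ} (j : Fin k) (b : Bool) :
    (Finset.univ : Finset (Fin k × Bool)).erase (j, b)
      = insert (j, !b) ((Finset.univ.erase j) ×ˢ (Finset.univ : Finset Bool)) := by
  ext ⟨j', b'⟩
  simp only [Finset.mem_erase, Finset.mem_insert, Finset.mem_product, Finset.mem_univ,
    and_true, true_and, Prod.ext_iff, Ne]
  by_cases hj : j' = j
  · subst hj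
    cases b <;> cases b' <;> simp
  · simp [hj]

lemma W_eval {k : ℕ} (α : Fin k → ℂ) (j : Fin k) (b : Bool) :
    ∏ l ∈ (Finset.univ : Finset (Fin k × Bool)).erase (j, b),
        ((if b then α j else -α j) - (if l.2 then α l.1 else -α l.1))
      = 2 * (if b then (1:ℂ) else -1) * α j *
          ∏ j' ∈ Finset.univ.erase j, ((α j)^2 - (α j')^2) := by
  rw [erase_pair_eq]
  have hnm : (j, !b) ∉ (Finset.univ.erase j) ×ˢ (Finset.univ : Finset Bool) := by
    simp
  rw [Finset.prod_insert hnm, Finset.prod_product]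
  have h1 : ((if b then α j else -α j) - (if (!b : Bool) then α j else -α j))
      = 2 * (if b then (1:ℂ) else -1) * α j := by
    cases b <;> simp <;> ring
  have h2 : ∀ j' ∈ Finset.univ.erase j,
      (∏ b' : Bool, ((if b then α j else -α j) - (if b' then α j' else -α j')))
        = (α j)^2 - (α j')^2 := by
    intro j' _
    rw [Fintype.prod_bool]
    cases b <;> simp <;> ring
  rw [Finset.prod_congr rfl h2, h1]


def boolUnitsEquiv : Bool ≃ ℤˣ where
  toFun := fun b => if b then 1 else -1
  invFun := fun u => decide (u = 1)
  left_inv := by intro b; cases b <;> simp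
  right_inv := by
    intro u
    rcases Int.units_eq_one_or u with h | h <;> subst h <;> simp

end SSC
end SSCAux

open Complex Metric Set in
/-- **Concise form of the sign sum, symplectic case** (diagonal terms included). -/
theorem sign_sum_contour_symplectic (k : ℕ) (hk : 1 ≤ k) (r : ℝ) (hr : 0 < r)
    (F : (Fin k → ℂ) → ℂ)
    (hFanal : AnalyticOnNhd ℂ F {z : Fin k → ℂ | ∀ i, ‖z i‖ ≤ r})
    (hFsym : ∀ (σ : Equiv.Perm (Fin k)) (a : Fin k → ℂ), F (a ∘ σ) = F a)
    (f g : ℂ → ℂ)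
    (hganal : AnalyticOnNhd ℂ g {s : ℂ | ‖s‖ ≤ 2 * r})
    (hfg : ∀ s : ℂ, s ≠ 0 → ‖s‖ ≤ 2 * r → f s = s⁻¹ + g s)
    (K : (Fin k → ℂ) → ℂ)
    (hK : ∀ a : Fin k → ℂ,
      K a = F a * ∏ p ∈ (Finset.univ : Finset (Fin k × Fin k)).filter (fun p => p.1 ≤ p.2),
        f (a p.1 + a p.2))
    (α : Fin k → ℂ) (hα0 : ∀ j, 0 < ‖α j‖) (hα : ∀ j, ‖α j‖ < r)
    (hαdist : Function.Injective
      (fun p : Fin k × Bool => if p.2 then α p.1 else -α p.1)) :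
    (∑ ε : Fin k → ℤˣ, K (fun j => (((ε j : ℤ) : ℂ)) * α j))
    = ((-1 : ℂ) ^ (k * (k - 1) / 2) * 2 ^ k / (k.factorial : ℂ)) *
        (1 / (2 * (Real.pi : ℂ) * Complex.I) ^ k) *
        iteratedCircleIntegral k r (fun z =>
          K z * (vandermondeΔ (fun i => (z i) ^ 2)) ^ 2 * (∏ j, z j) /
            ∏ i : Fin k, ∏ j : Fin k, ((z i - α j) * (z i + α j))) := by
  classical
  -- Notation
  set m := k * (k - 1) / 2 with hmdef
  set β : Fin k × Bool → ℂ := fun p => if p.2 then α p.1 else -α p.1 with hβ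
  have hβinj : Function.Injective β := hαdist
  set sgn : Bool → ℂ := fun b => if b then 1 else -1 with hsgn
  have hβeq : ∀ p : Fin k × Bool, β p = sgn p.2 * α p.1 := by
    rintro ⟨j, b⟩; cases b <;> simp [hβ, hsgn]
  have hsgn_ne : ∀ b, sgn b ≠ 0 := by intro b; cases b <;> simp [hsgn]
  have hsgn_sq : ∀ b, sgn b * sgn b = 1 := by intro b; cases b <;> simp [hsgn]
  have hsgn_abs : ∀ b, ‖sgn b‖ = 1 := by intro b; cases b <;> simp [hsgn]
  have hα_ne : ∀ j, α j ≠ 0 := by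
    intro j h
    have := hα0 j
    rw [h] at this
    simp at this
  -- nonvanishing constants
  have hπ : (2 * (Real.pi : ℂ) * Complex.I) ≠ 0 := by
    simp [Real.pi_ne_zero, Complex.I_ne_zero]
  have h2k : ((2:ℂ)) ^ k ≠ 0 := pow_ne_zero _ two_ne_zero
  have hfac : ((k.factorial : ℂ)) ≠ 0 := by
    exact_mod_cast Nat.cast_ne_zero.mpr (Nat.factorial_ne_zero k)
  have hm2 : ((-1 : ℂ)) ^ m * (-1) ^ m = 1 := by
    rw [← pow_add, ← two_mul, pow_mul]
    norm_num
  have hsign : ((-1 : ℂ)) ^ m = 1 ∨ ((-1 : ℂ)) ^ m = -1 := by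
    rcases Nat.even_or_odd m with h | h
    · exact Or.inl h.neg_one_pow
    · exact Or.inr h.neg_one_pow
  -- injectivity of squares
  have hsq_inj : ∀ i j : Fin k, (α i)^2 = (α j)^2 → i = j := by
    intro i j h
    have h2 : (α i - α j) * (α i + α j) = 0 := by linear_combination h
    rcases mul_eq_zero.mp h2 with h3 | h3
    · have h4 : α i = α j := sub_eq_zero.mp h3
      have h5 : β (i, true) = β (j, true) := by simp [hβ, h4]
      exact congrArg Prod.fst (hβinj h5)
    · have h4 : α i = -α j := eq_neg_of_add_eq_zero_left h3
      have h5 : β (i, true) = β (j, false) := by simp [hβ, h4]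
      have h6 := hβinj h5
      simp [Prod.ext_iff] at h6
  have hΔ : vandermondeΔ (fun j => (α j)^2) ≠ 0 := by
    unfold vandermondeΔ
    refine Finset.prod_ne_zero_iff.mpr fun p hp => ?_
    have hlt : p.1 < p.2 := by simpa using hp
    exact sub_ne_zero.2 fun h => absurd (hsq_inj _ _ h) (ne_of_gt hlt)
  have hDsq : (vandermondeΔ (fun j => (α j)^2))^2 ≠ 0 := pow_ne_zero _ hΔ
  have hAprod : (∏ j, α j) ≠ 0 := Finset.prod_ne_zero_iff.mpr fun j _ => hα_ne j
  -- the analytic numerator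
  set ft : ℂ → ℂ := fun s => 1 + s * g s with hft
  have hft_anal : AnalyticOnNhd ℂ ft {s : ℂ | ‖s‖ ≤ 2 * r} :=
    analyticOnNhd_const.add (analyticOnNhd_id.mul hganal)
  set P : Set (Fin k → ℂ) := {z : Fin k → ℂ | ∀ i, ‖z i‖ ≤ r} with hP
  set Gt : (Fin k → ℂ) → ℂ := fun z => F z *
      (∏ p ∈ Finset.univ.filter (fun p : Fin k × Fin k => p.1 < p.2),
        ((z p.2 - z p.1)^2 * ((z p.1 + z p.2) * ft (z p.1 + z p.2)))) *
      ∏ i, ((2:ℂ)⁻¹ * ft (2 * z i)) with hGt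
  have hproj : ∀ i : Fin k, AnalyticOnNhd ℂ (fun z : Fin k → ℂ => z i) P :=
    fun i => (ContinuousLinearMap.proj i : (Fin k → ℂ) →L[ℂ] ℂ).analyticOnNhd P
  have hGt_anal : AnalyticOnNhd ℂ Gt P := by
    rw [hGt]
    refine (hFanal.mul (SSC.analyticOnNhd_finset_prod _ _ _ ?_)).mul
      (SSC.analyticOnNhd_finset_prod _ _ _ ?_)
    · intro p _
      have hsum_anal : AnalyticOnNhd ℂ (fun z : Fin k → ℂ => z p.1 + z p.2) P :=
        (hproj p.1).add (hproj p.2)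
      have hmaps : Set.MapsTo (fun z : Fin k → ℂ => z p.1 + z p.2) P
          {s : ℂ | ‖s‖ ≤ 2 * r} := by
        intro z hz
        simp only [hP, Set.mem_setOf_eq] at hz ⊢
        calc ‖z p.1 + z p.2‖ ≤ ‖z p.1‖ + ‖z p.2‖ :=
              norm_add_le _ _
          _ ≤ 2 * r := by have h1 := hz p.1; have h2 := hz p.2; linarith
      have hcomp : AnalyticOnNhd ℂ (fun z : Fin k → ℂ => ft (z p.1 + z p.2)) P := by
        have := hft_anal.comp hsum_anal hmaps
        simpa [Function.comp_def] using this
      exact (((hproj p.2).sub (hproj p.1)).pow 2).mul (hsum_anal.mul hcomp)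
    · intro i _
      have h2 : AnalyticOnNhd ℂ (fun z : Fin k → ℂ => 2 * z i) P :=
        analyticOnNhd_const.mul (hproj i)
      have hmaps : Set.MapsTo (fun z : Fin k → ℂ => 2 * z i) P
          {s : ℂ | ‖s‖ ≤ 2 * r} := by
        intro z hz
        simp only [hP, Set.mem_setOf_eq] at hz ⊢
        rw [norm_mul, Complex.norm_two]
        have := hz i
        nlinarith
      have hcomp : AnalyticOnNhd ℂ (fun z : Fin k → ℂ => ft (2 * z i)) P := by
        have := hft_anal.comp h2 hmaps
        simpa [Function.comp_def] using this
      exact analyticOnNhd_const.mul hcomp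
  have hGt_eq : ∀ z : Fin k → ℂ, (∀ i, ‖z i‖ ≤ r) → (∀ i, z i ≠ 0) →
      K z * (vandermondeΔ (fun i => (z i)^2))^2 * (∏ j, z j) = Gt z := by
    intro z hzr hz0
    have habs2 : ∀ i i' : Fin k, ‖z i + z i'‖ ≤ 2 * r := by
      intro i i'
      calc ‖z i + z i'‖ ≤ ‖z i‖ + ‖z i'‖ :=
            norm_add_le _ _
        _ ≤ 2 * r := by have h1 := hzr i; have h2 := hzr i'; linarith
    rw [hK z]
    have hunion : ((Finset.univ : Finset (Fin k × Fin k)).filter fun p => p.1 ≤ p.2)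
        = (Finset.univ.filter fun p : Fin k × Fin k => p.1 < p.2)
          ∪ (Finset.univ.filter fun p : Fin k × Fin k => p.1 = p.2) := by
      ext p
      simp only [Finset.mem_filter, Finset.mem_union, Finset.mem_univ, true_and]
      constructor
      · intro h; exact lt_or_eq_of_le h
      · rintro (h | h); exacts [le_of_lt h, le_of_eq h]
    have hdisj : Disjoint (Finset.univ.filter fun p : Fin k × Fin k => p.1 < p.2)
        (Finset.univ.filter fun p : Fin k × Fin k => p.1 = p.2) := by
      rw [Finset.disjoint_left]
      intro p h1 h2
      simp only [Finset.mem_filter] at h1 h2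
      exact absurd h2.2 (ne_of_lt h1.2)
    rw [hunion, Finset.prod_union hdisj]
    have hdiag : ∏ p ∈ Finset.univ.filter (fun p : Fin k × Fin k => p.1 = p.2),
        f (z p.1 + z p.2) = ∏ i : Fin k, f (2 * z i) := by
      refine Finset.prod_nbij' (fun p => p.1) (fun i => (i, i)) ?_ ?_ ?_ ?_ ?_
      · simp
      · simp
      · intro p hp
        have h : p.1 = p.2 := by simpa using hp
        exact Prod.ext rfl h
      · intro i _; rfl
      · intro p hp
        have h : p.1 = p.2 := by simpa using hp
        rw [← h, two_mul]
    rw [hdiag]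
    have hvdm : (vandermondeΔ (fun i => (z i)^2))^2
        = ∏ p ∈ Finset.univ.filter (fun p : Fin k × Fin k => p.1 < p.2),
            ((z p.2 - z p.1)^2 * (z p.1 + z p.2)^2) := by
      unfold vandermondeΔ
      rw [← Finset.prod_pow]
      exact Finset.prod_congr rfl fun p _ => by ring
    rw [hvdm]
    have e1 : (∏ p ∈ Finset.univ.filter (fun p : Fin k × Fin k => p.1 < p.2),
          f (z p.1 + z p.2)) *
        (∏ p ∈ Finset.univ.filter (fun p : Fin k × Fin k => p.1 < p.2),
          ((z p.2 - z p.1)^2 * (z p.1 + z p.2)^2))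
        = ∏ p ∈ Finset.univ.filter (fun p : Fin k × Fin k => p.1 < p.2),
            ((z p.2 - z p.1)^2 * ((z p.1 + z p.2) * ft (z p.1 + z p.2))) := by
      rw [← Finset.prod_mul_distrib]
      refine Finset.prod_congr rfl fun p _ => ?_
      by_cases hs : z p.1 + z p.2 = 0
      · rw [hs]; simp
      · rw [hfg _ hs (habs2 _ _)]
        simp only [hft]
        field_simp
    have e2 : (∏ i : Fin k, f (2 * z i)) * (∏ j : Fin k, z j)
        = ∏ i : Fin k, ((2:ℂ)⁻¹ * ft (2 * z i)) := by
      rw [← Finset.prod_mul_distrib]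
      refine Finset.prod_congr rfl fun i _ => ?_
      have h2z : (2:ℂ) * z i ≠ 0 := mul_ne_zero two_ne_zero (hz0 i)
      have habs : ‖2 * z i‖ ≤ 2 * r := by
        rw [norm_mul, Complex.norm_two]
        have := hzr i
        nlinarith
      rw [hfg _ h2z habs]
      simp only [hft]
      field_simp
      rw [mul_add, mul_one_div_cancel (hz0 i)]
      ring
    show _ = F z * (∏ p ∈ Finset.univ.filter (fun p : Fin k × Fin k => p.1 < p.2),
        ((z p.2 - z p.1)^2 * ((z p.1 + z p.2) * ft (z p.1 + z p.2)))) *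
      ∏ i, ((2:ℂ)⁻¹ * ft (2 * z i))
    rw [← e1, ← e2]
    ring
  have hGt_zero : ∀ z : Fin k → ℂ, ∀ i j : Fin k, i < j → (z i = z j ∨ z i = -z j) →
      Gt z = 0 := by
    intro z i j hij hor
    show F z * (∏ p ∈ Finset.univ.filter (fun p : Fin k × Fin k => p.1 < p.2),
        ((z p.2 - z p.1)^2 * ((z p.1 + z p.2) * ft (z p.1 + z p.2)))) *
      (∏ i, ((2:ℂ)⁻¹ * ft (2 * z i))) = 0
    have hmem : (i, j) ∈ Finset.univ.filter (fun p : Fin k × Fin k => p.1 < p.2) := by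
      simp [hij]
    have hzero : ((z (i,j).2 - z (i,j).1)^2 *
        ((z (i,j).1 + z (i,j).2) * ft (z (i,j).1 + z (i,j).2))) = 0 := by
      rcases hor with h | h
      · rw [h]; ring
      · rw [h]; ring
    rw [Finset.prod_eq_zero (f := fun p : Fin k × Fin k =>
      (z p.2 - z p.1)^2 * ((z p.1 + z p.2) * ft (z p.1 + z p.2))) hmem hzero]
    ring
  -- symmetry of K
  have hKsym : ∀ (σ : Equiv.Perm (Fin k)) (a : Fin k → ℂ), K (a ∘ σ) = K a := by
    intro σ a
    rw [hK, hK, hFsym]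
    congr 1
    exact SSC.prod_pairs_perm_le (fun i j => f (a i + a j))
      (fun i j => by simp [add_comm]) σ
  -- Step 1 : rewrite the integrand on the torus
  have hβr : ∀ p : Fin k × Bool, ‖β p‖ < r := by
    rintro ⟨j, b⟩; cases b <;> simp [hβ, hα j]
  haveI : Nonempty (Fin k × Bool) := ⟨(⟨0, hk⟩, true)⟩
  have hstep1 : iteratedCircleIntegral k r (fun z =>
        K z * (vandermondeΔ (fun i => (z i) ^ 2)) ^ 2 * (∏ j, z j) /
          ∏ i : Fin k, ∏ j : Fin k, ((z i - α j) * (z i + α j)))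
      = iteratedCircleIntegral k r (fun z => Gt z * ∏ i, (∏ p, (z i - β p))⁻¹) := by
    refine SSC.iterated_congr hr k _ _ fun z hz => ?_
    have hz0 : ∀ i, z i ≠ 0 := by
      intro i h
      have h2 := hz i
      rw [h] at h2
      simp only [norm_zero] at h2
      exact absurd h2.symm (ne_of_gt hr)
    have hzr : ∀ i, ‖z i‖ ≤ r := fun i => (hz i).le
    have hD : ∀ i : Fin k, ∏ p : Fin k × Bool, (z i - β p)
        = ∏ j : Fin k, ((z i - α j) * (z i + α j)) := by
      intro i
      rw [Fintype.prod_prod_type]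
      refine Finset.prod_congr rfl fun j _ => ?_
      rw [Fintype.prod_bool]
      simp [hβ, sub_neg_eq_add]
    rw [hGt_eq z hzr hz0, div_eq_mul_inv]
    congr 1
    rw [Finset.prod_inv_distrib]
    congr 1
    exact Finset.prod_congr rfl fun i _ => (hD i).symm
  have hstep2 : iteratedCircleIntegral k r (fun z => Gt z * ∏ i, (∏ p, (z i - β p))⁻¹)
      = (2 * Real.pi * Complex.I) ^ k *
          ∑ c : Fin k → Fin k × Bool, Gt (β ∘ c) *
            ∏ i, (∏ l ∈ Finset.univ.erase (c i), (β (c i) - β l))⁻¹ :=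
    SSC.iterated_residue hr β hβinj hβr k Gt hGt_anal
  -- Step 3 : evaluate the sum of residues
  have hsum : ∑ c : Fin k → Fin k × Bool, Gt (β ∘ c) *
        ∏ i, (∏ l ∈ Finset.univ.erase (c i), (β (c i) - β l))⁻¹
      = (k.factorial : ℂ) * (((-1 : ℂ)) ^ m / 2 ^ k *
          ∑ ε : Fin k → Bool, K (fun j => sgn (ε j) * α j)) := by
    have hvanish : ∀ c : Fin k → Fin k × Bool,
        c ∈ (Finset.univ : Finset (Fin k → Fin k × Bool)) →
        (Gt (β ∘ c) * ∏ i, (∏ l ∈ Finset.univ.erase (c i), (β (c i) - β l))⁻¹) ≠ 0 →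
        Function.Injective (fun i => (c i).1) := by
      intro c _ hne
      by_contra hinj
      apply hne
      rw [Function.not_injective_iff] at hinj
      obtain ⟨i, j, hfst, hij⟩ := hinj
      have key : ∀ i j : Fin k, (c i).1 = (c j).1 → i < j → Gt (β ∘ c) = 0 := by
        intro i j hfst hlt
        refine hGt_zero (β ∘ c) i j hlt ?_
        cases h1 : (c i).2 <;> cases h2 : (c j).2
        · exact Or.inl (by simp [Function.comp_def, hβ, h1, h2, hfst])
        · exact Or.inr (by simp [Function.comp_def, hβ, h1, h2, hfst])
        · exact Or.inr (by simp [Function.comp_def, hβ, h1, h2, hfst])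
        · exact Or.inl (by simp [Function.comp_def, hβ, h1, h2, hfst])
      rcases lt_or_gt_of_ne hij with h | h
      · rw [key i j hfst h, zero_mul]
      · rw [key j i hfst.symm h, zero_mul]
    rw [← Finset.sum_filter_of_ne hvanish]
    have hbij : ∑ c ∈ Finset.univ.filter (fun c : Fin k → Fin k × Bool =>
          Function.Injective (fun i => (c i).1)),
          Gt (β ∘ c) * ∏ i, (∏ l ∈ Finset.univ.erase (c i), (β (c i) - β l))⁻¹
        = ∑ p : Equiv.Perm (Fin k) × (Fin k → Bool),
            Gt (β ∘ fun i => (p.1 i, p.2 i)) *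
              ∏ i, (∏ l ∈ Finset.univ.erase (p.1 i, p.2 i), (β (p.1 i, p.2 i) - β l))⁻¹ := by
      refine Finset.sum_bij'
        (fun c hc => (Equiv.ofBijective (fun i => (c i).1)
          ((Finite.injective_iff_bijective).mp (by simpa using hc)), fun i => (c i).2))
        (fun p _ => fun i => (p.1 i, p.2 i)) ?_ ?_ ?_ ?_ ?_
      · intro c hc; exact Finset.mem_univ _
      · intro p hp
        simp only [Finset.mem_filter, Finset.mem_univ, true_and]
        exact fun i j h => p.1.injective h
      · intro c hc; rfl
      · intro p hp
        refine Prod.ext ?_ rfl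
        exact Equiv.ext fun i => rfl
      · intro c hc; rfl
    rw [hbij, Fintype.sum_prod_type]
    have hterm : ∀ (σ : Equiv.Perm (Fin k)) (ε : Fin k → Bool),
        Gt (β ∘ fun i => (σ i, ε i)) *
          ∏ i, (∏ l ∈ Finset.univ.erase (σ i, ε i), (β (σ i, ε i) - β l))⁻¹
        = ((-1:ℂ))^m / 2^k * K (fun j => sgn (ε (σ⁻¹ j)) * α j) := by
      intro σ ε
      have habs : ∀ i, ‖(β ∘ fun i => (σ i, ε i)) i‖ ≤ r := by
        intro i
        simp only [Function.comp_def, hβeq]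
        rw [norm_mul, hsgn_abs, one_mul]
        exact (hα _).le
      have hne0 : ∀ i, (β ∘ fun i => (σ i, ε i)) i ≠ 0 := by
        intro i
        simp only [Function.comp_def, hβeq]
        exact mul_ne_zero (hsgn_ne _) (hα_ne _)
      have hnum : Gt (β ∘ fun i => (σ i, ε i))
          = K (fun j => sgn (ε (σ⁻¹ j)) * α j) * (vandermondeΔ (fun j => (α j)^2))^2 *
            ((∏ i, sgn (ε i)) * ∏ j, α j) := by
        rw [← hGt_eq _ habs hne0]
        have hKeq : K (β ∘ fun i => (σ i, ε i)) = K (fun j => sgn (ε (σ⁻¹ j)) * α j) := by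
          have hfun : (β ∘ fun i => (σ i, ε i)) = (fun j => sgn (ε (σ⁻¹ j)) * α j) ∘ σ := by
            funext i
            simp [Function.comp_def, hβeq, Equiv.Perm.inv_def, Equiv.symm_apply_apply]
          rw [hfun, hKsym]
        have hvd : (vandermondeΔ (fun i => ((β ∘ fun i => (σ i, ε i)) i)^2))^2
            = (vandermondeΔ (fun j => (α j)^2))^2 := by
          have hfun : (fun i => ((β ∘ fun i => (σ i, ε i)) i)^2)
              = (fun j => (α j)^2) ∘ σ := by
            funext i
            simp only [Function.comp_def, hβeq]
            rw [mul_pow,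
              show sgn (ε i) ^ 2 = 1 from by rw [sq]; exact hsgn_sq _, one_mul]
          rw [hfun, SSC.vandermonde_sq_perm]
        have hpr : (∏ i, (β ∘ fun i => (σ i, ε i)) i)
            = (∏ i, sgn (ε i)) * ∏ j, α j := by
          calc (∏ i, (β ∘ fun i => (σ i, ε i)) i) = ∏ i, sgn (ε i) * α (σ i) :=
              Finset.prod_congr rfl fun i _ => hβeq _
            _ = (∏ i, sgn (ε i)) * ∏ j, α j := by
              rw [Finset.prod_mul_distrib, Equiv.prod_comp σ α]
        rw [hKeq, hvd, hpr]
      have hden : (∏ i, (∏ l ∈ Finset.univ.erase (σ i, ε i), (β (σ i, ε i) - β l))⁻¹)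
          = ((2:ℂ)^k * ((∏ i, sgn (ε i)) * (∏ j, α j)) *
              (((-1:ℂ))^m * (vandermondeΔ (fun j => (α j)^2))^2))⁻¹ := by
        rw [Finset.prod_inv_distrib]
        congr 1
        have hWe : ∀ i, (∏ l ∈ Finset.univ.erase (σ i, ε i), (β (σ i, ε i) - β l))
            = 2 * sgn (ε i) * α (σ i) *
                ∏ j' ∈ Finset.univ.erase (σ i), ((α (σ i))^2 - (α j')^2) := by
          intro i
          rw [hβ, hsgn]
          exact SSC.W_eval α (σ i) (ε i)
        rw [Finset.prod_congr rfl fun i _ => hWe i]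
        rw [Finset.prod_mul_distrib, Finset.prod_mul_distrib, Finset.prod_mul_distrib,
          Finset.prod_const]
        rw [Equiv.prod_comp σ (fun j => ∏ j' ∈ Finset.univ.erase j, ((α j)^2 - (α j')^2)),
          Equiv.prod_comp σ α, SSC.off_diag_prod_eq (fun j => (α j)^2), ← hmdef]
        simp only [Finset.card_univ, Fintype.card_fin]
        ring
      rw [hnum, hden]
      have hE : (∏ i, sgn (ε i)) ≠ 0 := Finset.prod_ne_zero_iff.mpr fun i _ => hsgn_ne _
      rcases hsign with h | h <;> rw [h] <;>
        field_simp <;> ring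
    rw [Finset.sum_congr rfl (fun σ _ => Finset.sum_congr rfl (fun ε _ => hterm σ ε))]
    have hre : ∀ σ : Equiv.Perm (Fin k),
        (∑ ε : Fin k → Bool, ((-1:ℂ))^m / 2^k * K (fun j => sgn (ε (σ⁻¹ j)) * α j))
        = ((-1:ℂ))^m / 2^k * ∑ ε : Fin k → Bool, K (fun j => sgn (ε j) * α j) := by
      intro σ
      rw [← Finset.mul_sum]
      congr 1
      exact Fintype.sum_equiv (Equiv.arrowCongr σ (Equiv.refl Bool)) _ _ (fun ε => rfl)
    rw [Finset.sum_congr rfl (fun σ _ => hre σ)]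
    rw [Finset.sum_const, Finset.card_univ, Fintype.card_perm, Fintype.card_fin,
      nsmul_eq_mul]
  -- Step 4 : convert the boolean sum to the ℤˣ sum
  have hbool : ∑ ε : Fin k → Bool, K (fun j => sgn (ε j) * α j)
      = ∑ ε : Fin k → ℤˣ, K (fun j => (((ε j : ℤ) : ℂ)) * α j) := by
    refine Fintype.sum_equiv (Equiv.piCongrRight (fun _ : Fin k => SSC.boolUnitsEquiv)) _ _
      (fun ε => ?_)
    congr 1
    funext j
    cases hb : ε j <;>
      simp [hsgn, SSC.boolUnitsEquiv, hb, Equiv.piCongrRight]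
  rw [hstep1, hstep2, hsum, hbool]
  have h2πk : (2 * (Real.pi:ℂ) * Complex.I) ^ k ≠ 0 := pow_ne_zero _ hπ
  rcases hsign with h | h <;> rw [h] <;> field_simp <;> ring
end

section
/- Let k ≥ 1 and let q_1,…,q_{2k} be complex numbers with |q_j| < 1 for all j, such that q_{k+1},…,q_{2k} are nonzero and pairwise distinct. Then ∫_0^1 ∏_{j=1}^{k} (1 − e^{2πiθ} q_j)^{−1} (1 − e^{−2πiθ} q_{k+j})^{−1} dθ = ∑_{m=1}^{k} [ ∏_{i=1}^{k} (1 − q_i q_{k+m})^{−1} ] · [ ∏_{i=1, i≠m}^{k} (1 − q_{k+i} q_{k+m}^{−1})^{−1} ]. -/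
open Finset Complex Polynomial Metric


-- helpers
lemma one_sub_unit_mul_ne {u z : ℂ} (hu : ‖u‖ = 1) (hz : ‖z‖ < 1) :
    1 - u * z ≠ 0 := by
  intro h
  have h1 : u * z = 1 := by rwa [sub_eq_zero, eq_comm] at h
  have := congrArg (‖·‖) h1
  rw [norm_mul, hu, one_mul, norm_one] at this
  exact absurd this (ne_of_lt hz)

lemma abs_exp_real_mul_I (t : ℝ) : ‖Complex.exp (2 * Real.pi * Complex.I * t)‖ = 1 := by
  rw [Complex.norm_exp]
  simp [Complex.mul_re]

lemma abs_exp_neg_real_mul_I (t : ℝ) :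
    ‖Complex.exp (-(2 * Real.pi * Complex.I * t))‖ = 1 := by
  rw [Complex.norm_exp]
  simp [Complex.mul_re]


lemma factor_eq {x y : ℂ} (hx : x ≠ 0) (hy : y ≠ 0) (hxy : x ≠ y) (w : ℂ) :
    Polynomial.eval w (Lagrange.basisDivisor y⁻¹ x⁻¹) = (1 - x * y⁻¹)⁻¹ * (1 - x * w) := by
  rw [Lagrange.basisDivisor, Polynomial.eval_mul, Polynomial.eval_C,
    Polynomial.eval_sub, Polynomial.eval_X, Polynomial.eval_C]
  have h1 : (1 - x * y⁻¹) ≠ 0 := by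
    rw [sub_ne_zero]; intro h; exact hxy ((mul_inv_eq_one₀ hy).mp h.symm)
  have h2 : y⁻¹ - x⁻¹ ≠ 0 := by
    rw [sub_ne_zero]; exact fun h => hxy (by rw [← inv_inv x, ← h, inv_inv])
  rw [inv_mul_eq_div, inv_mul_eq_div, div_eq_div_iff h2 h1]
  field_simp
  ring

lemma partial_fractions {k : ℕ} (hk : 1 ≤ k) (b : Fin k → ℂ) (hb0 : ∀ i, b i ≠ 0)
    (hbinj : Function.Injective b) (w : ℂ) (hw : ∀ i, 1 - b i * w ≠ 0) :
    ∏ i : Fin k, (1 - b i * w)⁻¹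
      = ∑ m : Fin k, (∏ i ∈ Finset.univ.erase m, (1 - b i * (b m)⁻¹)⁻¹) * (1 - b m * w)⁻¹ := by
  have : NeZero k := ⟨by omega⟩
  set v : Fin k → ℂ := fun i => (b i)⁻¹ with hv
  have hvinj : Function.Injective v := fun i j h => hbinj (by
    simpa [hv, inv_inj] using h)
  have hsum := Lagrange.sum_basis (s := Finset.univ) (v := v) hvinj.injOn univ_nonempty
  have key : ∑ m : Fin k, ∏ i ∈ Finset.univ.erase m,
      ((1 - b i * (b m)⁻¹)⁻¹ * (1 - b i * w)) = 1 := by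
    have h' := congrArg (Polynomial.eval w) hsum
    rw [Polynomial.eval_finset_sum, Polynomial.eval_one] at h'
    calc ∑ m : Fin k, ∏ i ∈ Finset.univ.erase m,
          ((1 - b i * (b m)⁻¹)⁻¹ * (1 - b i * w))
        = ∑ m : Fin k, Polynomial.eval w (Lagrange.basis Finset.univ v m) := by
          refine Finset.sum_congr rfl fun m _ => ?_
          rw [Lagrange.basis, Polynomial.eval_prod]
          refine Finset.prod_congr rfl fun i hi => ?_
          have him : i ≠ m := (Finset.mem_erase.mp hi).1
          have hbne : b i ≠ b m := fun h => him (hbinj h)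
          exact (factor_eq (hb0 i) (hb0 m) hbne w).symm
      _ = 1 := h'
  calc ∏ i : Fin k, (1 - b i * w)⁻¹
      = (∑ m : Fin k, ∏ i ∈ Finset.univ.erase m,
          ((1 - b i * (b m)⁻¹)⁻¹ * (1 - b i * w))) * ∏ i : Fin k, (1 - b i * w)⁻¹ := by
        rw [key, one_mul]
    _ = ∑ m : Fin k, (∏ i ∈ Finset.univ.erase m, (1 - b i * (b m)⁻¹)⁻¹) * (1 - b m * w)⁻¹ := by
        rw [Finset.sum_mul]
        refine Finset.sum_congr rfl fun m _ => ?_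
        rw [Finset.prod_mul_distrib]
        have hsplit : ∏ i : Fin k, (1 - b i * w)⁻¹
            = (1 - b m * w)⁻¹ * ∏ i ∈ Finset.univ.erase m, (1 - b i * w)⁻¹ :=
          (Finset.mul_prod_erase Finset.univ _ (Finset.mem_univ m)).symm
        rw [hsplit]
        have hD : (∏ i ∈ Finset.univ.erase m, (1 - b i * w)) *
            ∏ i ∈ Finset.univ.erase m, (1 - b i * w)⁻¹ = 1 := by
          rw [← Finset.prod_mul_distrib]
          exact Finset.prod_eq_one fun i _ => mul_inv_cancel₀ (hw i)
        calc (∏ i ∈ Finset.univ.erase m, (1 - b i * (b m)⁻¹)⁻¹) *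
              (∏ i ∈ Finset.univ.erase m, (1 - b i * w)) *
              ((1 - b m * w)⁻¹ * ∏ i ∈ Finset.univ.erase m, (1 - b i * w)⁻¹)
            = (∏ i ∈ Finset.univ.erase m, (1 - b i * (b m)⁻¹)⁻¹) * (1 - b m * w)⁻¹ *
              ((∏ i ∈ Finset.univ.erase m, (1 - b i * w)) *
               ∏ i ∈ Finset.univ.erase m, (1 - b i * w)⁻¹) := by ring
          _ = _ := by rw [hD, mul_one]


lemma one_sub_ne' {u : ℂ} (h : ‖u‖ < 1) : 1 - u ≠ 0 := by
  intro hh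
  rw [sub_eq_zero] at hh
  rw [← hh] at h
  simp at h


lemma cauchy_step {k : ℕ} (a : Fin k → ℂ) (ha : ∀ i, ‖a i‖ < 1)
    (c : ℂ) (hc : ‖c‖ < 1) :
    (∫ t in (0:ℝ)..1, (∏ j : Fin k, (1 - Complex.exp (2 * Real.pi * Complex.I * t) * a j)⁻¹) *
        (1 - Complex.exp (-(2 * Real.pi * Complex.I * t)) * c)⁻¹)
      = ∏ i : Fin k, (1 - a i * c)⁻¹ := by
  set G : ℂ → ℂ := fun z => ∏ j : Fin k, (1 - z * a j)⁻¹ with hG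
  have hGd : DifferentiableOn ℂ G (closedBall (0:ℂ) 1) := by
    apply DifferentiableOn.fun_finsetProd
    intro j _
    apply DifferentiableOn.inv
    · exact (differentiableOn_const 1).sub (differentiableOn_id.mul (differentiableOn_const _))
    · intro z hz
      apply one_sub_ne'
      calc ‖z * a j‖ = ‖z‖ * ‖a j‖ := norm_mul _ _
        _ ≤ 1 * ‖a j‖ := by
            apply mul_le_mul_of_nonneg_right _ (norm_nonneg _)
            simpa using mem_closedBall_zero_iff.mp hz
        _ < 1 := by rw [one_mul]; exact ha j
  have hcmem : c ∈ ball (0:ℂ) 1 := by simpa [mem_ball_zero_iff] using hc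
  have hCau := hGd.circleIntegral_sub_inv_smul hcmem
  set g : ℝ → ℂ := fun θ =>
    Complex.exp (θ * Complex.I) *
      ((Complex.exp (θ * Complex.I) - c)⁻¹ * G (Complex.exp (θ * Complex.I))) with hg
  have hne : ∀ θ : ℝ, Complex.exp (θ * Complex.I) - c ≠ 0 := by
    intro θ
    intro h
    rw [sub_eq_zero] at h
    have : ‖Complex.exp (θ * Complex.I)‖ = 1 := by
      rw [Complex.norm_exp]; simp [Complex.mul_re]
    rw [← h, this] at hc
    exact lt_irrefl 1 hc
  have hcirc : (∮ z in C(0, 1), (z - c)⁻¹ • G z) = ∫ θ in (0:ℝ)..2 * Real.pi, Complex.I * g θ := by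
    rw [circleIntegral]
    refine intervalIntegral.integral_congr fun θ _ => ?_
    simp only [deriv_circleMap, circleMap, hg, Complex.ofReal_one, zero_add, one_mul,
      smul_eq_mul]
    ring
  have hint : ∫ θ in (0:ℝ)..2 * Real.pi, Complex.I * g θ
      = Complex.I * ∫ θ in (0:ℝ)..2 * Real.pi, g θ :=
    intervalIntegral.integral_const_mul _ _
  have hFg : ∀ t : ℝ, (∏ j : Fin k, (1 - Complex.exp (2 * Real.pi * Complex.I * t) * a j)⁻¹) *
      (1 - Complex.exp (-(2 * Real.pi * Complex.I * t)) * c)⁻¹ = g (2 * Real.pi * t) := by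
    intro t
    have harg : (((2 * Real.pi * t : ℝ)) : ℂ) * Complex.I = 2 * Real.pi * Complex.I * t := by
      push_cast; ring
    have hinv : (1 - Complex.exp (-(2 * Real.pi * Complex.I * t)) * c)⁻¹
        = Complex.exp (2 * Real.pi * Complex.I * t) *
          (Complex.exp (2 * Real.pi * Complex.I * t) - c)⁻¹ := by
      have h1 : 1 - Complex.exp (-(2 * Real.pi * Complex.I * t)) * c
          = Complex.exp (-(2 * Real.pi * Complex.I * t)) *
            (Complex.exp (2 * Real.pi * Complex.I * t) - c) := by
        rw [mul_sub, ← Complex.exp_add]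
        simp
      rw [h1, mul_inv, Complex.exp_neg, inv_inv]
    rw [hg]
    simp only [harg]
    rw [hinv, hG]
    ring
  have hsub : (∫ t in (0:ℝ)..1, g (2 * Real.pi * t))
      = (2 * Real.pi)⁻¹ • ∫ θ in (0:ℝ)..2 * Real.pi, g θ := by
    have h2π : (2 * Real.pi) ≠ 0 := by positivity
    rw [intervalIntegral.integral_comp_mul_left g h2π]
    norm_num
  calc (∫ t in (0:ℝ)..1, (∏ j : Fin k, (1 - Complex.exp (2 * Real.pi * Complex.I * t) * a j)⁻¹) *
        (1 - Complex.exp (-(2 * Real.pi * Complex.I * t)) * c)⁻¹)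
      = ∫ t in (0:ℝ)..1, g (2 * Real.pi * t) :=
        intervalIntegral.integral_congr fun t _ => hFg t
    _ = (2 * Real.pi)⁻¹ • ∫ θ in (0:ℝ)..2 * Real.pi, g θ := hsub
    _ = G c := by
        have : (∫ θ in (0:ℝ)..2 * Real.pi, g θ) = Complex.I⁻¹ * ((2 * Real.pi * Complex.I) • G c) := by
          rw [← hCau, hcirc, hint, ← mul_assoc, inv_mul_cancel₀ Complex.I_ne_zero, one_mul]
        rw [this]
        rw [smul_eq_mul, Complex.real_smul]
        push_cast
        field_simp [Complex.I_ne_zero, Real.pi_ne_zero]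
    _ = ∏ i : Fin k, (1 - a i * c)⁻¹ := by
        rw [hG]
        exact Finset.prod_congr rfl fun i _ => by rw [mul_comm]

/-- **Evaluation of the local integral** (Lemma on the arithmetic factor `B_p`):
`∫_0^1 ∏_j (1−e(θ)a_j)⁻¹(1−e(−θ)b_j)⁻¹ dθ
  = ∑_m ∏_i (1−a_i b_m)⁻¹ ∏_{i≠m} (1−b_i b_m⁻¹)⁻¹`. -/
theorem local_factor_integral_eval (k : ℕ) (hk : 1 ≤ k)
    (a b : Fin k → ℂ)
    (ha : ∀ i, ‖a i‖ < 1) (hb : ∀ i, ‖b i‖ < 1)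
    (hb0 : ∀ i, b i ≠ 0) (hbinj : Function.Injective b) :
    (∫ θ in (0:ℝ)..1, ∏ j : Fin k,
        ((1 - Complex.exp (2 * Real.pi * Complex.I * θ) * a j)⁻¹ *
          (1 - Complex.exp (-(2 * Real.pi * Complex.I * θ)) * b j)⁻¹))
    = ∑ m : Fin k,
        (∏ i : Fin k, (1 - a i * b m)⁻¹) *
          ∏ i ∈ Finset.univ.erase m, (1 - b i * (b m)⁻¹)⁻¹ := by
  have habs : ∀ t : ℝ, ‖Complex.exp (2 * Real.pi * Complex.I * t)‖ = 1 := by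
    intro t; rw [Complex.norm_exp]; simp [Complex.mul_re]
  have habs' : ∀ t : ℝ, ‖Complex.exp (-(2 * Real.pi * Complex.I * t))‖ = 1 := by
    intro t; rw [Complex.norm_exp]; simp [Complex.mul_re]
  -- pointwise rewrite of the integrand
  have hpt : ∀ t : ℝ,
      (∏ j : Fin k, ((1 - Complex.exp (2 * Real.pi * Complex.I * t) * a j)⁻¹ *
          (1 - Complex.exp (-(2 * Real.pi * Complex.I * t)) * b j)⁻¹))
      = ∑ m : Fin k, (∏ i ∈ Finset.univ.erase m, (1 - b i * (b m)⁻¹)⁻¹) *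
          ((∏ j : Fin k, (1 - Complex.exp (2 * Real.pi * Complex.I * t) * a j)⁻¹) *
            (1 - Complex.exp (-(2 * Real.pi * Complex.I * t)) * b m)⁻¹) := by
    intro t
    set w : ℂ := Complex.exp (-(2 * Real.pi * Complex.I * t)) with hwdef
    have hw : ∀ i, 1 - b i * w ≠ 0 := by
      intro i; rw [mul_comm]; exact one_sub_unit_mul_ne (habs' t) (hb i)
    rw [Finset.prod_mul_distrib]
    have : ∏ j : Fin k, (1 - w * b j)⁻¹ = ∏ j : Fin k, (1 - b j * w)⁻¹ :=
      Finset.prod_congr rfl fun j _ => by rw [mul_comm]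
    rw [this, partial_fractions hk b hb0 hbinj w hw, Finset.mul_sum]
    refine Finset.sum_congr rfl fun m _ => ?_
    rw [mul_comm (b m) w]
    ring
  have hInt : ∀ m : Fin k, IntervalIntegrable
      (fun t : ℝ => (∏ j : Fin k, (1 - Complex.exp (2 * Real.pi * Complex.I * t) * a j)⁻¹) *
        (1 - Complex.exp (-(2 * Real.pi * Complex.I * t)) * b m)⁻¹)
      MeasureTheory.volume 0 1 := by
    intro m
    apply Continuous.intervalIntegrable
    have hexp : Continuous fun t : ℝ => Complex.exp (2 * Real.pi * Complex.I * t) :=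
      Complex.continuous_exp.comp (continuous_const.mul Complex.continuous_ofReal)
    have hexp' : Continuous fun t : ℝ => Complex.exp (-(2 * Real.pi * Complex.I * t)) :=
      Complex.continuous_exp.comp (continuous_const.mul Complex.continuous_ofReal).neg
    apply Continuous.mul
    · apply continuous_finset_prod
      intro j _
      exact ((continuous_const.sub (hexp.mul continuous_const)).inv₀ fun t =>
        one_sub_unit_mul_ne (habs t) (ha j))
    · exact (continuous_const.sub (hexp'.mul continuous_const)).inv₀ fun t =>
        one_sub_unit_mul_ne (habs' t) (hb m)
  calc (∫ θ in (0:ℝ)..1, ∏ j : Fin k,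
        ((1 - Complex.exp (2 * Real.pi * Complex.I * θ) * a j)⁻¹ *
          (1 - Complex.exp (-(2 * Real.pi * Complex.I * θ)) * b j)⁻¹))
      = ∫ θ in (0:ℝ)..1, ∑ m : Fin k,
          (∏ i ∈ Finset.univ.erase m, (1 - b i * (b m)⁻¹)⁻¹) *
          ((∏ j : Fin k, (1 - Complex.exp (2 * Real.pi * Complex.I * θ) * a j)⁻¹) *
            (1 - Complex.exp (-(2 * Real.pi * Complex.I * θ)) * b m)⁻¹) :=
        intervalIntegral.integral_congr fun t _ => hpt t
    _ = ∑ m : Fin k, ∫ θ in (0:ℝ)..1,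
          (∏ i ∈ Finset.univ.erase m, (1 - b i * (b m)⁻¹)⁻¹) *
          ((∏ j : Fin k, (1 - Complex.exp (2 * Real.pi * Complex.I * θ) * a j)⁻¹) *
            (1 - Complex.exp (-(2 * Real.pi * Complex.I * θ)) * b m)⁻¹) := by
        apply intervalIntegral.integral_finset_sum
        intro m _
        exact (hInt m).const_mul _
    _ = ∑ m : Fin k,
        (∏ i : Fin k, (1 - a i * b m)⁻¹) *
          ∏ i ∈ Finset.univ.erase m, (1 - b i * (b m)⁻¹)⁻¹ := by
        refine Finset.sum_congr rfl fun m _ => ?_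
        rw [intervalIntegral.integral_const_mul, cauchy_step a ha (b m) (hb m), mul_comm]
end

section
/- Let δ ∈ (0, 1/8), let α_1, α_2, α_3, α_4 be complex numbers with |Re α_j| < δ for all j, and let s be a complex number with Re s > 1/2 + δ. Then ∑ m_1^{−(s+α_1)} m_2^{−(s+α_2)} n_1^{−(s−α_3)} n_2^{−(s−α_4)}, where the sum runs over all quadruples of positive integers (m_1, m_2, n_1, n_2) with m_1 m_2 = n_1 n_2, converges absolutely and equals ζ(2s+α_1−α_3) ζ(2s+α_1−α_4) ζ(2s+α_2−α_3) ζ(2s+α_2−α_4) / ζ(4s+α_1+α_2−α_3−α_4). -/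
/-!
Put `z₁ = s + α₁`, `z₂ = s + α₂`, `z₃ = s - α₃`, `z₄ = s - α₄`. Every solution of
`m₁ m₂ = n₁ n₂` in positive integers is uniquely `m₁ = a b`, `m₂ = c d`, `n₁ = a c`, `n₂ = b d`
with `b, c` coprime (`a = gcd(m₁, n₁)`). In these coordinates the summand factors as
`a^{-(z₁+z₃)} d^{-(z₂+z₄)} · b^{-(z₁+z₄)} c^{-(z₂+z₃)}`, so the series is
`ζ(z₁+z₃) ζ(z₂+z₄)` times a sum over coprime pairs. Writing an arbitrary pair as `g` times a
coprime pair shows `ζ(u) ζ(v) = ζ(u+v) ∑_{(b,c)=1} b^{-u} c^{-v}`, which evaluates that sum.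
-/

open Complex

namespace PNat

theorem exists_coprime_mul_mul (m n : ℕ+) :
    ∃ g b c : ℕ+, Nat.Coprime b c ∧ m = g * b ∧ n = g * c := by
  set g := m.gcd n with hg
  obtain ⟨b, hb⟩ := m.gcd_dvd_left n
  obtain ⟨c, hc⟩ := m.gcd_dvd_right n
  refine ⟨g, b, c, ?_, hb, hc⟩
  have h : (g : ℕ) * Nat.gcd b c = g := by
    rw [← Nat.gcd_mul_left, ← mul_coe, ← mul_coe, ← hb, ← hc, hg, gcd_coe]
  exact (Nat.mul_eq_left g.ne_zero).mp h

theorem eq_of_mul_eq_mul_of_coprime {g g' b b' c c' : ℕ+} (h : Nat.Coprime b c)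
    (h' : Nat.Coprime b' c') (hb : g * b = g' * b') (hc : g * c = g' * c') : g = g' := by
  have hgcd : ∀ {g b c : ℕ+}, Nat.Coprime b c → Nat.gcd (g * b : ℕ+) (g * c : ℕ+) = g :=
    fun h ↦ by rw [mul_coe, mul_coe, Nat.gcd_mul_left, h, mul_one]
  exact PNat.coe_injective ((hgcd h).symm.trans (by rw [hb, hc, hgcd h']))

end PNat

abbrev CoprimePairs : Type := {p : ℕ+ × ℕ+ // Nat.Coprime p.1 p.2}

abbrev ProductEqQuadruples : Type :=
  {q : (ℕ+ × ℕ+) × (ℕ+ × ℕ+) // ((q.1.1 : ℕ) * (q.1.2 : ℕ)) = (q.2.1 : ℕ) * (q.2.2 : ℕ)}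

noncomputable def gcdCoprimeEquiv : ℕ+ × CoprimePairs ≃ ℕ+ × ℕ+ :=
  Equiv.ofBijective (fun x ↦ (x.1 * x.2.1.1, x.1 * x.2.1.2)) <| by
    constructor
    · rintro ⟨g, ⟨⟨b, c⟩, h⟩⟩ ⟨g', ⟨⟨b', c'⟩, h'⟩⟩ heq
      obtain ⟨hb, hc⟩ := Prod.mk.inj heq
      obtain rfl := PNat.eq_of_mul_eq_mul_of_coprime h h' hb hc
      obtain rfl := mul_left_cancel hb
      obtain rfl := mul_left_cancel hc
      rfl
    · rintro ⟨m, n⟩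
      obtain ⟨g, b, c, h, rfl, rfl⟩ := PNat.exists_coprime_mul_mul m n
      exact ⟨⟨g, ⟨(b, c), h⟩⟩, rfl⟩

theorem gcdCoprimeEquiv_apply (x : ℕ+ × CoprimePairs) :
    gcdCoprimeEquiv x = (x.1 * x.2.1.1, x.1 * x.2.1.2) :=
  rfl

noncomputable def productEqEquiv : (ℕ+ × ℕ+) × CoprimePairs ≃ ProductEqQuadruples :=
  Equiv.ofBijective
    (fun x ↦ ⟨((x.1.1 * x.2.1.1, x.2.1.2 * x.1.2), (x.1.1 * x.2.1.2, x.2.1.1 * x.1.2)),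
      by simp only [PNat.mul_coe]; ring⟩) <| by
    constructor
    · rintro ⟨⟨a, d⟩, ⟨⟨b, c⟩, h⟩⟩ ⟨⟨a', d'⟩, ⟨⟨b', c'⟩, h'⟩⟩ heq
      simp only [Subtype.mk.injEq, Prod.mk.injEq] at heq
      obtain ⟨⟨hb, hd⟩, hc, -⟩ := heq
      obtain rfl := PNat.eq_of_mul_eq_mul_of_coprime h h' hb hc
      obtain rfl := mul_left_cancel hb
      obtain rfl := mul_left_cancel hc
      obtain rfl := mul_left_cancel hd
      rfl
    · rintro ⟨⟨⟨m₁, m₂⟩, ⟨n₁, n₂⟩⟩, hq⟩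
      obtain ⟨a, b, c, h, rfl, rfl⟩ := PNat.exists_coprime_mul_mul m₁ n₁
      have hbc : b * m₂ = c * n₂ := by
        apply PNat.coe_injective
        simp only [PNat.mul_coe] at hq ⊢
        exact Nat.eq_of_mul_eq_mul_left a.pos (by rw [← mul_assoc, hq, mul_assoc])
      obtain ⟨d, rfl⟩ : c ∣ m₂ := PNat.dvd_iff.mpr <|
        h.symm.dvd_of_dvd_mul_left (by rw [← PNat.mul_coe]; exact PNat.dvd_iff.mp ⟨n₂, hbc⟩)
      obtain rfl : n₂ = b * d := mul_left_cancel (by rw [← hbc, mul_left_comm])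
      exact ⟨⟨(a, d), ⟨(b, c), h⟩⟩, rfl⟩

theorem productEqEquiv_apply_coe (x : (ℕ+ × ℕ+) × CoprimePairs) :
    (productEqEquiv x : (ℕ+ × ℕ+) × (ℕ+ × ℕ+)) =
      ((x.1.1 * x.2.1.1, x.2.1.2 * x.1.2), (x.1.1 * x.2.1.2, x.2.1.1 * x.1.2)) :=
  rfl

theorem hasSum_mul_of_summable_norm {ι κ R : Type*} [NormedRing R] [CompleteSpace R]
    {f : ι → R} {g : κ → R} {a b : R} (hf : Summable fun i ↦ ‖f i‖)
    (hg : Summable fun k ↦ ‖g k‖) (ha : HasSum f a) (hb : HasSum g b) :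
    HasSum (fun x : ι × κ ↦ f x.1 * g x.2) (a * b) :=
  ha.mul hb (summable_mul_of_summable_norm hf hg)

theorem hasSum_pnat_cpow_neg_riemannZeta {w : ℂ} (hw : 1 < w.re) :
    HasSum (fun n : ℕ+ ↦ ((n : ℕ) : ℂ) ^ (-w)) (riemannZeta w) := by
  have h : HasSum (fun n : ℕ+ ↦ LSeries.term 1 w n) (riemannZeta w) :=
    hasSum_pnat_iff.mpr (by rw [LSeries.term_zero, add_zero]; exact LSeriesHasSum_one hw)
  exact h.congr_fun fun n ↦ by
    rw [LSeries.term_of_ne_zero n.ne_zero, Pi.one_apply, one_div, cpow_neg]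

theorem summable_norm_pnat_cpow_neg {w : ℂ} (hw : 1 < w.re) :
    Summable fun n : ℕ+ ↦ ‖((n : ℕ) : ℂ) ^ (-w)‖ :=
  summable_norm_iff.mpr (hasSum_pnat_cpow_neg_riemannZeta hw).summable

theorem pnat_mul_cpow (x y : ℕ+) (z : ℂ) :
    (((x * y : ℕ+) : ℕ) : ℂ) ^ z = ((x : ℕ) : ℂ) ^ z * ((y : ℕ) : ℂ) ^ z := by
  rw [PNat.mul_coe, Nat.cast_mul, natCast_mul_natCast_cpow]

theorem pnat_cpow_add (x : ℕ+) (z w : ℂ) :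
    ((x : ℕ) : ℂ) ^ (z + w) = ((x : ℕ) : ℂ) ^ z * ((x : ℕ) : ℂ) ^ w :=
  cpow_add _ _ (Nat.cast_ne_zero.mpr x.ne_zero)

theorem summable_norm_coprimePairs_cpow_neg {u v : ℂ} (hu : 1 < u.re) (hv : 1 < v.re) :
    Summable fun p : CoprimePairs ↦ ‖((p.1.1 : ℕ) : ℂ) ^ (-u) * ((p.1.2 : ℕ) : ℂ) ^ (-v)‖ :=
  ((summable_norm_pnat_cpow_neg hu).mul_norm (summable_norm_pnat_cpow_neg hv)).comp_injective
    Subtype.val_injective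

theorem hasSum_coprimePairs_cpow_neg {u v : ℂ} (hu : 1 < u.re) (hv : 1 < v.re) :
    HasSum (fun p : CoprimePairs ↦ ((p.1.1 : ℕ) : ℂ) ^ (-u) * ((p.1.2 : ℕ) : ℂ) ^ (-v))
      (riemannZeta u * riemannZeta v / riemannZeta (u + v)) := by
  have huv : 1 < (u + v).re := by rw [add_re]; linarith
  have hG : Summable fun p : CoprimePairs ↦
      ((p.1.1 : ℕ) : ℂ) ^ (-u) * ((p.1.2 : ℕ) : ℂ) ^ (-v) :=
    (summable_norm_coprimePairs_cpow_neg hu hv).of_norm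
  have hpairs := hasSum_mul_of_summable_norm (summable_norm_pnat_cpow_neg hu)
    (summable_norm_pnat_cpow_neg hv) (hasSum_pnat_cpow_neg_riemannZeta hu)
    (hasSum_pnat_cpow_neg_riemannZeta hv)
  have hscaled := hasSum_mul_of_summable_norm (summable_norm_pnat_cpow_neg huv)
    (summable_norm_coprimePairs_cpow_neg hu hv) (hasSum_pnat_cpow_neg_riemannZeta huv) hG.hasSum
  have hsplit : HasSum (fun p : ℕ+ × ℕ+ ↦ ((p.1 : ℕ) : ℂ) ^ (-u) * ((p.2 : ℕ) : ℂ) ^ (-v))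
      (riemannZeta (u + v) *
        ∑' p : CoprimePairs, ((p.1.1 : ℕ) : ℂ) ^ (-u) * ((p.1.2 : ℕ) : ℂ) ^ (-v)) := by
    refine gcdCoprimeEquiv.hasSum_iff.mp <| hscaled.congr_fun fun x ↦ ?_
    rw [Function.comp_apply, gcdCoprimeEquiv_apply, pnat_mul_cpow, pnat_mul_cpow, neg_add,
      pnat_cpow_add]
    ring
  rw [hpairs.unique hsplit, mul_div_cancel_left₀ _ (riemannZeta_ne_zero_of_one_lt_re huv)]
  exact hG.hasSum

theorem hasSum_productEqQuadruples_cpow_neg {z₁ z₂ z₃ z₄ : ℂ} (h₁₃ : 1 < (z₁ + z₃).re)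
    (h₂₄ : 1 < (z₂ + z₄).re) (h₁₄ : 1 < (z₁ + z₄).re) (h₂₃ : 1 < (z₂ + z₃).re) :
    HasSum (fun q : ProductEqQuadruples ↦
        ((q.1.1.1 : ℕ) : ℂ) ^ (-z₁) * ((q.1.1.2 : ℕ) : ℂ) ^ (-z₂) *
          ((q.1.2.1 : ℕ) : ℂ) ^ (-z₃) * ((q.1.2.2 : ℕ) : ℂ) ^ (-z₄))
      (riemannZeta (z₁ + z₃) * riemannZeta (z₂ + z₄) *
        (riemannZeta (z₁ + z₄) * riemannZeta (z₂ + z₃) / riemannZeta (z₁ + z₄ + (z₂ + z₃)))) := by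
  have hF := hasSum_mul_of_summable_norm (summable_norm_pnat_cpow_neg h₁₃)
    (summable_norm_pnat_cpow_neg h₂₄) (hasSum_pnat_cpow_neg_riemannZeta h₁₃)
    (hasSum_pnat_cpow_neg_riemannZeta h₂₄)
  have hFG := hasSum_mul_of_summable_norm
    ((summable_norm_pnat_cpow_neg h₁₃).mul_norm (summable_norm_pnat_cpow_neg h₂₄))
    (summable_norm_coprimePairs_cpow_neg h₁₄ h₂₃) hF (hasSum_coprimePairs_cpow_neg h₁₄ h₂₃)
  refine productEqEquiv.hasSum_iff.mp <| hFG.congr_fun fun x ↦ ?_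
  simp only [Function.comp_apply, productEqEquiv_apply_coe, pnat_mul_cpow, neg_add,
    pnat_cpow_add]
  ring

theorem one_lt_re_add_add_sub {δ : ℝ} {s α β : ℂ} (hα : |α.re| < δ) (hβ : |β.re| < δ)
    (hs : 1 / 2 + δ < s.re) : 1 < (s + α + (s - β)).re := by
  simp only [add_re, sub_re]
  linarith [neg_abs_le α.re, le_abs_self β.re]

theorem shifted_fourth_moment_dirichlet_series_general
    (δ : ℝ)
    (α₁ α₂ α₃ α₄ : ℂ)
    (h1 : |α₁.re| < δ) (h2 : |α₂.re| < δ) (h3 : |α₃.re| < δ) (h4 : |α₄.re| < δ)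
    (s : ℂ) (hs : 1 / 2 + δ < s.re) :
    Summable (fun p : {q : (ℕ+ × ℕ+) × (ℕ+ × ℕ+) //
        ((q.1.1 : ℕ) * (q.1.2 : ℕ)) = (q.2.1 : ℕ) * (q.2.2 : ℕ)} =>
      ((p.1.1.1 : ℕ) : ℂ) ^ (-(s + α₁)) * ((p.1.1.2 : ℕ) : ℂ) ^ (-(s + α₂)) *
        ((p.1.2.1 : ℕ) : ℂ) ^ (-(s - α₃)) * ((p.1.2.2 : ℕ) : ℂ) ^ (-(s - α₄))) ∧
    (∑' p : {q : (ℕ+ × ℕ+) × (ℕ+ × ℕ+) //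
        ((q.1.1 : ℕ) * (q.1.2 : ℕ)) = (q.2.1 : ℕ) * (q.2.2 : ℕ)},
      ((p.1.1.1 : ℕ) : ℂ) ^ (-(s + α₁)) * ((p.1.1.2 : ℕ) : ℂ) ^ (-(s + α₂)) *
        ((p.1.2.1 : ℕ) : ℂ) ^ (-(s - α₃)) * ((p.1.2.2 : ℕ) : ℂ) ^ (-(s - α₄)))
    = riemannZeta (2 * s + α₁ - α₃) * riemannZeta (2 * s + α₁ - α₄) *
        riemannZeta (2 * s + α₂ - α₃) * riemannZeta (2 * s + α₂ - α₄) /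
        riemannZeta (4 * s + α₁ + α₂ - α₃ - α₄) := by
  have key := hasSum_productEqQuadruples_cpow_neg (one_lt_re_add_add_sub h1 h3 hs)
    (one_lt_re_add_add_sub h2 h4 hs) (one_lt_re_add_add_sub h1 h4 hs)
    (one_lt_re_add_add_sub h2 h3 hs)
  rw [show 2 * s + α₁ - α₃ = s + α₁ + (s - α₃) by ring,
    show 2 * s + α₁ - α₄ = s + α₁ + (s - α₄) by ring,
    show 2 * s + α₂ - α₃ = s + α₂ + (s - α₃) by ring,
    show 2 * s + α₂ - α₄ = s + α₂ + (s - α₄) by ring,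
    show 4 * s + α₁ + α₂ - α₃ - α₄ = s + α₁ + (s - α₄) + (s + α₂ + (s - α₃)) by ring]
  exact ⟨key.summable, key.tsum_eq.trans (by ring)⟩

/-- **The shifted fourth-moment Dirichlet series of `ζ`:**
`∑_{m₁m₂=n₁n₂} m₁^{−(s+α₁)} m₂^{−(s+α₂)} n₁^{−(s−α₃)} n₂^{−(s−α₄)}` converges absolutely and
equals `ζ(2s+α₁−α₃)ζ(2s+α₁−α₄)ζ(2s+α₂−α₃)ζ(2s+α₂−α₄)/ζ(4s+α₁+α₂−α₃−α₄)`. -/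
theorem shifted_fourth_moment_dirichlet_series
    (δ : ℝ) (hδ0 : 0 < δ) (hδ : δ < 1 / 8)
    (α₁ α₂ α₃ α₄ : ℂ)
    (h1 : |α₁.re| < δ) (h2 : |α₂.re| < δ) (h3 : |α₃.re| < δ) (h4 : |α₄.re| < δ)
    (s : ℂ) (hs : 1 / 2 + δ < s.re) :
    Summable (fun p : {q : (ℕ+ × ℕ+) × (ℕ+ × ℕ+) //
        ((q.1.1 : ℕ) * (q.1.2 : ℕ)) = (q.2.1 : ℕ) * (q.2.2 : ℕ)} =>
      ((p.1.1.1 : ℕ) : ℂ) ^ (-(s + α₁)) * ((p.1.1.2 : ℕ) : ℂ) ^ (-(s + α₂)) *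
        ((p.1.2.1 : ℕ) : ℂ) ^ (-(s - α₃)) * ((p.1.2.2 : ℕ) : ℂ) ^ (-(s - α₄))) ∧
    (∑' p : {q : (ℕ+ × ℕ+) × (ℕ+ × ℕ+) //
        ((q.1.1 : ℕ) * (q.1.2 : ℕ)) = (q.2.1 : ℕ) * (q.2.2 : ℕ)},
      ((p.1.1.1 : ℕ) : ℂ) ^ (-(s + α₁)) * ((p.1.1.2 : ℕ) : ℂ) ^ (-(s + α₂)) *
        ((p.1.2.1 : ℕ) : ℂ) ^ (-(s - α₃)) * ((p.1.2.2 : ℕ) : ℂ) ^ (-(s - α₄)))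
    = riemannZeta (2 * s + α₁ - α₃) * riemannZeta (2 * s + α₁ - α₄) *
        riemannZeta (2 * s + α₂ - α₃) * riemannZeta (2 * s + α₂ - α₄) /
        riemannZeta (4 * s + α₁ + α₂ - α₃ - α₄) :=
  shifted_fourth_moment_dirichlet_series_general δ α₁ α₂ α₃ α₄ h1 h2 h3 h4 s hs
end

section
/- Let k be a positive integer and let x be a real number with 0 ≤ x < 1. Then ∫_0^1 (1 − √x e^{2πiθ})^{−k} (1 − √x e^{−2πiθ})^{−k} dθ = (1 − x)^{1−2k} · ∑_{m=0}^{k−1} C(k−1, m)^2 x^m, where C(a,b) denotes the binomial coefficient. Equivalently, ∫_0^1 |1 − √x e^{2πiθ}|^{−2k} dθ = (1−x)^{1−2k} ∑_{m=0}^{k−1} C(k−1,m)^2 x^m. -/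
open Finset Nat

/-- trinomial revision without upper-bound hypothesis -/
lemma choose_mul_choose' (p k s : ℕ) (h : s ≤ k) :
    p.choose k * k.choose s = p.choose s * (p - s).choose (k - s) := by
  rcases le_or_gt k p with hkp | hkp
  · exact Nat.choose_mul h
  · rw [Nat.choose_eq_zero_of_lt hkp, zero_mul]
    rcases le_or_gt s p with hsp | hsp
    · rw [Nat.choose_eq_zero_of_lt (by omega : p - s < k - s), mul_zero]
    · rw [Nat.choose_eq_zero_of_lt hsp, zero_mul]

lemma choose_sub_comm (p s n : ℕ) :
    p.choose s * (p - s).choose n = p.choose n * (p - n).choose s := by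
  have h1 := choose_mul_choose' p (s + n) s (Nat.le_add_right _ _)
  have h2 := choose_mul_choose' p (s + n) n (Nat.le_add_left _ _)
  rw [Nat.add_sub_cancel_left] at h1
  rw [Nat.add_sub_cancel] at h2
  have h3 : (s + n).choose s = (s + n).choose n := Nat.choose_symm_add
  rw [← h1, ← h2, h3]

lemma inner_T (m n b : ℕ) (hbm : b ≤ m) :
    ∑ j ∈ range (m + 1), m.choose j * n.choose j * j.choose b
      = n.choose b * (m + n - b).choose (m - b) := by
  rcases le_or_gt b n with hbn | hbn
  · have h1 : ∑ j ∈ range (m + 1), m.choose j * n.choose j * j.choose b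
        = ∑ j ∈ Ico b (m + 1), m.choose j * n.choose j * j.choose b := by
      refine (Finset.sum_subset (fun j hj => ?_) (fun j hj hj' => ?_)).symm
      · simp only [mem_Ico, mem_range] at hj ⊢; omega
      · simp only [mem_range] at hj
        simp only [mem_Ico, not_and, not_le] at hj'
        have hjb : j < b := by
          rcases lt_or_ge j b with h | h
          · exact h
          · exact absurd (hj' h) (by omega)
        rw [Nat.choose_eq_zero_of_lt hjb, mul_zero]
    rw [h1, Finset.sum_Ico_eq_sum_range]
    have h2 : ∀ i, m.choose (b + i) * n.choose (b + i) * (b + i).choose b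
        = n.choose b * (m.choose (b + i) * (n - b).choose i) := by
      intro i
      have := choose_mul_choose' n (b + i) b (Nat.le_add_right _ _)
      rw [Nat.add_sub_cancel_left] at this
      rw [mul_assoc, this]; ring
    simp only [h2, ← Finset.mul_sum]
    congr 1
    have hV : (m + (n - b)).choose (m - b)
        = ∑ c ∈ range (m - b + 1), m.choose c * (n - b).choose (m - b - c) := by
      rw [Nat.add_choose_eq]
      exact Nat.sum_antidiagonal_eq_sum_range_succ (fun a b' => m.choose a * (n - b).choose b') _
    have hmb : m + 1 - b = m - b + 1 := by omega
    rw [hmb, ← Finset.sum_range_reflect]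
    rw [show m + n - b = m + (n - b) by omega, hV]
    refine Finset.sum_congr rfl fun i hi => ?_
    simp only [mem_range] at hi
    have hi' : i ≤ m - b := by omega
    rw [show b + (m - b + 1 - 1 - i) = m - i by omega,
      show m - b + 1 - 1 - i = m - b - i by omega,
      Nat.choose_symm (by omega : i ≤ m)]
  · rw [Nat.choose_eq_zero_of_lt hbn, zero_mul]
    refine Finset.sum_eq_zero fun j hj => ?_
    rcases le_or_gt b j with h | h
    · rw [Nat.choose_eq_zero_of_lt (lt_of_lt_of_le hbn h), mul_zero, zero_mul]
    · rw [Nat.choose_eq_zero_of_lt h, mul_zero]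

/-- Surányi's identity. -/
lemma suranyi (m n p : ℕ) :
    ∑ j ∈ range (m + 1), m.choose j * n.choose j * (p + j).choose (m + n)
      = p.choose m * p.choose n := by
  have hV : ∀ j, (p + j).choose (m + n)
      = ∑ a ∈ range (m + n + 1), p.choose a * j.choose (m + n - a) := by
    intro j
    rw [Nat.add_choose_eq]
    exact Nat.sum_antidiagonal_eq_sum_range_succ (fun a b => p.choose a * j.choose b) _
  calc ∑ j ∈ range (m + 1), m.choose j * n.choose j * (p + j).choose (m + n)
      = ∑ a ∈ range (m + n + 1), p.choose a *
          ∑ j ∈ range (m + 1), m.choose j * n.choose j * j.choose (m + n - a) := by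
        simp only [hV, Finset.mul_sum, Finset.sum_mul]
        rw [Finset.sum_comm]
        refine Finset.sum_congr rfl fun a _ => Finset.sum_congr rfl fun j _ => by ring
    _ = ∑ a ∈ Ico n (m + n + 1), p.choose a *
          ∑ j ∈ range (m + 1), m.choose j * n.choose j * j.choose (m + n - a) := by
        refine (Finset.sum_subset (fun a ha => ?_) (fun a ha ha' => ?_)).symm
        · simp only [mem_Ico, mem_range] at ha ⊢; omega
        · simp only [mem_range] at ha
          simp only [mem_Ico, not_and, not_le] at ha'
          have han : a < n := by
            rcases lt_or_ge a n with h | h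
            · exact h
            · exact absurd (ha' h) (by omega)
          have hz : ∑ j ∈ range (m + 1), m.choose j * n.choose j * j.choose (m + n - a) = 0 := by
            refine Finset.sum_eq_zero fun j hj => ?_
            simp only [mem_range] at hj
            rw [Nat.choose_eq_zero_of_lt (by omega : j < m + n - a), mul_zero]
          rw [hz, mul_zero]
    _ = ∑ t ∈ range (m + 1), p.choose (n + t) *
          (n.choose (m - t) * (n + t).choose t) := by
        rw [Finset.sum_Ico_eq_sum_range]
        rw [show m + n + 1 - n = m + 1 by omega]
        refine Finset.sum_congr rfl fun t ht => ?_
        simp only [mem_range] at ht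
        rw [inner_T m n (m + n - (n + t)) (by omega),
          show m + n - (n + t) = m - t by omega,
          show m + n - (m - t) = n + t by omega,
          show m - (m - t) = t by omega]
    _ = ∑ t ∈ range (m + 1), n.choose (m - t) * (p.choose n * (p - n).choose t) := by
        refine Finset.sum_congr rfl fun t _ => ?_
        have h1 := choose_mul_choose' p (n + t) t (Nat.le_add_left _ _)
        rw [Nat.add_sub_cancel] at h1
        have h2 := choose_sub_comm p t n
        calc p.choose (n + t) * (n.choose (m - t) * (n + t).choose t)
            = n.choose (m - t) * (p.choose (n + t) * (n + t).choose t) := by ring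
          _ = n.choose (m - t) * (p.choose t * (p - t).choose n) := by rw [h1]
          _ = n.choose (m - t) * (p.choose n * (p - n).choose t) := by rw [h2]
    _ = p.choose m * p.choose n := by
        rcases le_or_gt n p with hnp | hnp
        · have hV2 : p.choose m = ∑ c ∈ range (m + 1), (p - n).choose c * n.choose (m - c) := by
            rw [show p = (p - n) + n by omega, Nat.add_choose_eq]
            rw [show p - n + n - n = p - n by omega]
            exact Nat.sum_antidiagonal_eq_sum_range_succ
              (fun a b => (p - n).choose a * n.choose b) _
          rw [hV2, Finset.sum_mul]
          exact Finset.sum_congr rfl fun t _ => by ring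
        · rw [Nat.choose_eq_zero_of_lt hnp, mul_zero]
          refine Finset.sum_eq_zero fun t _ => ?_
          ring

lemma key_sum (K n : ℕ) :
    ∑ m ∈ range (K + 1),
        (if m ≤ n then K.choose m ^ 2 * ((n - m) + 2 * K).choose (2 * K) else 0)
      = ((n + K).choose K) ^ 2 := by
  have hs := suranyi K K (n + K)
  rw [← Finset.sum_range_reflect] at hs
  rw [sq, ← hs]
  refine Finset.sum_congr rfl fun m hm => ?_
  simp only [mem_range] at hm
  have hmK : m ≤ K := by omega
  rw [show K + 1 - 1 - m = K - m by omega, Nat.choose_symm hmK, ← sq]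
  rcases le_or_gt m n with h | h
  · rw [if_pos h, show n + K + (K - m) = n - m + 2 * K by omega,
      show K + K = 2 * K by ring]
  · rw [if_neg (by omega), Nat.choose_eq_zero_of_lt (by omega : n + K + (K - m) < K + K),
      mul_zero]


lemma hasSum_rhs (K : ℕ) (x : ℝ) (hx0 : 0 ≤ x) (hx1 : x < 1) :
    HasSum (fun n : ℕ => (((n + K).choose K : ℝ)) ^ 2 * x ^ n)
      ((∑ m ∈ range (K + 1), ((K.choose m : ℝ)) ^ 2 * x ^ m) / (1 - x) ^ (2 * K + 1)) := by
  have hxn : ‖x‖ < 1 := by rw [Real.norm_eq_abs, abs_of_nonneg hx0]; exact hx1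
  have base : HasSum (fun j : ℕ => ((j + 2 * K).choose (2 * K) : ℝ) * x ^ j)
      (1 / (1 - x) ^ (2 * K + 1)) := hasSum_choose_mul_geometric_of_norm_lt_one (2 * K) hxn
  -- shifted summands
  set g : ℕ → ℕ → ℝ := fun m n =>
    if m ≤ n then ((K.choose m : ℝ)) ^ 2 * ((n - m + 2 * K).choose (2 * K) : ℝ) * x ^ n else 0
    with hg
  have hgm : ∀ m, HasSum (g m)
      (((K.choose m : ℝ)) ^ 2 * x ^ m * (1 / (1 - x) ^ (2 * K + 1))) := by
    intro m
    have h1 : HasSum (fun n : ℕ => g m (n + m))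
        (((K.choose m : ℝ)) ^ 2 * x ^ m * (1 / (1 - x) ^ (2 * K + 1))) := by
      have := (base.mul_left (((K.choose m : ℝ)) ^ 2 * x ^ m))
      refine this.congr_fun fun n => ?_
      simp only [hg, if_pos (Nat.le_add_left m n), Nat.add_sub_cancel]
      rw [pow_add]
      ring
    have h2 := (hasSum_nat_add_iff (f := g m) m).mp h1
    have hz : ∑ i ∈ range m, g m i = 0 := by
      refine Finset.sum_eq_zero fun i hi => ?_
      simp only [mem_range] at hi
      simp only [hg]
      rw [if_neg (by omega)]
    rw [hz, add_zero] at h2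
    simpa using h2
  have total := hasSum_sum (s := range (K + 1)) (f := g)
    (fun m _ => hgm m)
  have hpt : ∀ n, ∑ m ∈ range (K + 1), g m n = (((n + K).choose K : ℝ)) ^ 2 * x ^ n := by
    intro n
    have hk := key_sum K n
    calc ∑ m ∈ range (K + 1), g m n
        = (∑ m ∈ range (K + 1), (if m ≤ n then
            ((K.choose m : ℝ)) ^ 2 * ((n - m + 2 * K).choose (2 * K) : ℝ) else 0)) * x ^ n := by
          rw [Finset.sum_mul]
          refine Finset.sum_congr rfl fun m _ => ?_
          simp only [hg]
          split_ifs <;> simp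
      _ = (((n + K).choose K : ℝ)) ^ 2 * x ^ n := by
          congr 1
          have : ∀ m, (if m ≤ n then
              ((K.choose m : ℝ)) ^ 2 * ((n - m + 2 * K).choose (2 * K) : ℝ) else 0)
              = ((if m ≤ n then (K.choose m) ^ 2 * ((n - m + 2 * K).choose (2 * K)) else 0 : ℕ) : ℝ) := by
            intro m; split_ifs <;> push_cast <;> ring
          simp only [this, ← Nat.cast_sum, hk]
          push_cast; ring
  have := total.congr_fun (fun n => (hpt n).symm)
  convert this using 1
  rw [Finset.sum_div]
  exact Finset.sum_congr rfl fun m _ => by ring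

lemma abs_exp_I_mul (t : ℝ) : ‖Complex.exp (2 * (Real.pi:ℂ) * Complex.I * t)‖ = 1 := by
  rw [Complex.norm_exp]
  have : (2 * (Real.pi:ℂ) * Complex.I * t).re = 0 := by simp
  rw [this, Real.exp_zero]

lemma abs_exp_I_mul' (t : ℝ) :
    ‖Complex.exp (-(2 * (Real.pi:ℂ) * Complex.I * t))‖ = 1 := by
  rw [Complex.norm_exp]
  have : (-(2 * (Real.pi:ℂ) * Complex.I * t)).re = 0 := by simp
  rw [this, Real.exp_zero]

lemma main_complex (K : ℕ) (a : ℝ) (ha0 : 0 ≤ a) (ha1 : a < 1) :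
    (∫ θ in (0:ℝ)..1,
        (1 - (a : ℂ) * Complex.exp (2 * Real.pi * Complex.I * θ)) ^ (-((K + 1 : ℕ) : ℤ)) *
          (1 - (a : ℂ) * Complex.exp (-(2 * Real.pi * Complex.I * θ))) ^ (-((K + 1 : ℕ) : ℤ)))
      = (((∑ m ∈ range (K + 1), ((K.choose m : ℝ)) ^ 2 * (a ^ 2) ^ m) /
          (1 - a ^ 2) ^ (2 * K + 1) : ℝ) : ℂ) := by
  set E : ℝ → ℂ := fun θ => Complex.exp (2 * (Real.pi : ℂ) * Complex.I * θ) with hE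
  set E' : ℝ → ℂ := fun θ => Complex.exp (-(2 * (Real.pi : ℂ) * Complex.I * θ)) with hE'
  have hx0 : (0:ℝ) ≤ a ^ 2 := sq_nonneg a
  have hx1 : a ^ 2 < 1 := by nlinarith
  have hEn0 : ∀ θ : ℝ, ‖E θ‖ = 1 := fun θ => by
    show ‖Complex.exp (2 * (Real.pi : ℂ) * Complex.I * θ)‖ = 1
    rw [abs_exp_I_mul]
  have hE'n0 : ∀ θ : ℝ, ‖E' θ‖ = 1 := fun θ => by
    show ‖Complex.exp (-(2 * (Real.pi : ℂ) * Complex.I * θ))‖ = 1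
    rw [abs_exp_I_mul']
  have hnorm1 : ∀ θ : ℝ, ‖(a : ℂ) * E θ‖ < 1 := fun θ => by
    rw [norm_mul, hEn0 θ, mul_one, Complex.norm_real, Real.norm_eq_abs, abs_of_nonneg ha0]
    exact ha1
  have hnorm2 : ∀ θ : ℝ, ‖(a : ℂ) * E' θ‖ < 1 := fun θ => by
    rw [norm_mul, hE'n0 θ, mul_one, Complex.norm_real, Real.norm_eq_abs, abs_of_nonneg ha0]
    exact ha1
  set u : ℕ → ℝ := fun n => ((n + K).choose K : ℝ) * a ^ n with hu_def
  have hu : Summable u := by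
    apply summable_choose_mul_geometric_of_norm_lt_one K (r := a)
    rw [Real.norm_eq_abs, abs_of_nonneg ha0]; exact ha1
  have hEn : ∀ θ : ℝ, ‖E θ‖ = 1 := fun θ => by
    show ‖Complex.exp (2 * (Real.pi : ℂ) * Complex.I * θ)‖ = 1
    rw [abs_exp_I_mul]
  have hE'n : ∀ θ : ℝ, ‖E' θ‖ = 1 := fun θ => by
    show ‖Complex.exp (-(2 * (Real.pi : ℂ) * Complex.I * θ))‖ = 1
    rw [abs_exp_I_mul']
  have hnormpow1 : ∀ (θ : ℝ) (n : ℕ), ‖((n + K).choose K : ℂ) * ((a : ℂ) * E θ) ^ n‖ = u n := by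
    intro θ n
    rw [norm_mul, norm_pow, norm_mul, hEn θ, mul_one, Complex.norm_real,
      Real.norm_eq_abs, abs_of_nonneg ha0, Complex.norm_natCast]
  have hnormpow2 : ∀ (θ : ℝ) (n : ℕ), ‖((n + K).choose K : ℂ) * ((a : ℂ) * E' θ) ^ n‖ = u n := by
    intro θ n
    rw [norm_mul, norm_pow, norm_mul, hE'n θ, mul_one, Complex.norm_real,
      Real.norm_eq_abs, abs_of_nonneg ha0, Complex.norm_natCast]
  have hsummable1 : ∀ θ : ℝ, Summable fun n => ‖((n + K).choose K : ℂ) * ((a : ℂ) * E θ) ^ n‖ :=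
    fun θ => hu.congr fun n => (hnormpow1 θ n).symm
  have hsummable2 : ∀ θ : ℝ, Summable fun n => ‖((n + K).choose K : ℂ) * ((a : ℂ) * E' θ) ^ n‖ :=
    fun θ => hu.congr fun n => (hnormpow2 θ n).symm
  have h1 : ∀ θ : ℝ, HasSum (fun n => ((n + K).choose K : ℂ) * ((a : ℂ) * E θ) ^ n)
      (1 / (1 - (a : ℂ) * E θ) ^ (K + 1)) :=
    fun θ => hasSum_choose_mul_geometric_of_norm_lt_one K (hnorm1 θ)
  have h2 : ∀ θ : ℝ, HasSum (fun n => ((n + K).choose K : ℂ) * ((a : ℂ) * E' θ) ^ n)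
      (1 / (1 - (a : ℂ) * E' θ) ^ (K + 1)) :=
    fun θ => hasSum_choose_mul_geometric_of_norm_lt_one K (hnorm2 θ)
  set F : ℕ × ℕ → ℝ → ℂ := fun p θ =>
    (((p.1 + K).choose K : ℂ) * ((a : ℂ) * E θ) ^ p.1) *
      (((p.2 + K).choose K : ℂ) * ((a : ℂ) * E' θ) ^ p.2) with hF
  have hEcont : Continuous E := Complex.continuous_exp.comp (by fun_prop)
  have hE'cont : Continuous E' := Complex.continuous_exp.comp (by fun_prop)
  have hFcont : ∀ p, Continuous (F p) := fun p =>
    ((continuous_const.mul ((continuous_const.mul hEcont).pow p.1)).mul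
      (continuous_const.mul ((continuous_const.mul hE'cont).pow p.2)))
  have hFint : ∀ p, MeasureTheory.Integrable (F p)
      (MeasureTheory.volume.restrict (Set.Ioc (0:ℝ) 1)) :=
    fun p => (hFcont p).integrableOn_Ioc
  have hFnormint : ∀ p : ℕ × ℕ,
      (∫ θ in Set.Ioc (0:ℝ) 1, ‖F p θ‖) = u p.1 * u p.2 := by
    intro p
    have : (fun θ => ‖F p θ‖) = fun _ => u p.1 * u p.2 := by
      funext θ
      rw [hF, norm_mul, hnormpow1 θ p.1, hnormpow2 θ p.2]
    rw [this, MeasureTheory.setIntegral_const, Real.volume_real_Ioc]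
    simp
  have hsumint : Summable fun p : ℕ × ℕ => ∫ θ in Set.Ioc (0:ℝ) 1, ‖F p θ‖ := by
    apply Summable.congr _ (fun p => (hFnormint p).symm)
    have hn : Summable fun n => ‖u n‖ := hu.abs.congr fun n => (Real.norm_eq_abs _).symm
    exact summable_mul_of_summable_norm hn hn
  have key := MeasureTheory.hasSum_integral_of_summable_integral_norm hFint hsumint
  -- pointwise identification of the integrand with the double series
  have hpt : ∀ θ : ℝ,
      (1 - (a : ℂ) * E θ) ^ (-((K + 1 : ℕ) : ℤ)) * (1 - (a : ℂ) * E' θ) ^ (-((K + 1 : ℕ) : ℤ))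
        = ∑' p : ℕ × ℕ, F p θ := by
    intro θ
    have := tsum_mul_tsum_of_summable_norm (hsummable1 θ) (hsummable2 θ)
    rw [(h1 θ).tsum_eq, (h2 θ).tsum_eq] at this
    rw [← this, zpow_neg, zpow_neg, zpow_natCast, zpow_natCast, one_div, one_div]
  -- evaluate each term integral
  have two_pi_I_ne : (2 * (Real.pi : ℂ) * Complex.I) ≠ 0 := by
    simp [Real.pi_ne_zero, Complex.I_ne_zero]
  have hterm : ∀ p : ℕ × ℕ, (∫ θ in Set.Ioc (0:ℝ) 1, F p θ)
      = if p.1 = p.2 then ((p.1 + K).choose K : ℂ) ^ 2 * ((a : ℂ) ^ 2) ^ p.1 else 0 := by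
    rintro ⟨n, m⟩
    have hexp : ∀ θ : ℝ, Complex.exp ((n : ℂ) * (2 * (Real.pi:ℂ) * Complex.I * θ)) *
        Complex.exp ((m : ℂ) * (-(2 * (Real.pi:ℂ) * Complex.I * θ)))
        = Complex.exp ((((n:ℂ) - m) * (2 * (Real.pi:ℂ) * Complex.I)) * θ) := by
      intro θ; rw [← Complex.exp_add]; congr 1; ring
    have hFform : ∀ θ : ℝ, F (n, m) θ
        = (((n + K).choose K : ℂ) * ((m + K).choose K : ℂ) * (a:ℂ) ^ (n + m)) *
            Complex.exp ((((n:ℂ) - m) * (2 * (Real.pi:ℂ) * Complex.I)) * θ) := by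
      intro θ
      show (((n + K).choose K : ℂ) * ((a : ℂ) * Complex.exp (2 * (Real.pi:ℂ) * Complex.I * θ)) ^ n)
          * (((m + K).choose K : ℂ) *
            ((a : ℂ) * Complex.exp (-(2 * (Real.pi:ℂ) * Complex.I * θ))) ^ m) = _
      rw [mul_pow, mul_pow, ← Complex.exp_nat_mul, ← Complex.exp_nat_mul, ← hexp θ, pow_add]
      ring
    rcases eq_or_ne n m with rfl | hnm
    · simp only [if_pos rfl]
      have hconst : ∀ θ : ℝ, F (n, n) θ = ((n + K).choose K : ℂ) ^ 2 * ((a : ℂ) ^ 2) ^ n := by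
        intro θ
        rw [hFform θ, sub_self, zero_mul, zero_mul, Complex.exp_zero, mul_one]
        ring
      simp only [hconst]
      rw [MeasureTheory.setIntegral_const, Real.volume_real_Ioc]
      simp
    · simp only [if_neg hnm]
      rw [← intervalIntegral.integral_of_le zero_le_one]
      simp only [hFform]
      rw [intervalIntegral.integral_const_mul]
      have hcne : (((n:ℂ) - m) * (2 * (Real.pi:ℂ) * Complex.I)) ≠ 0 :=
        mul_ne_zero (sub_ne_zero.mpr (by exact_mod_cast hnm)) two_pi_I_ne
      rw [integral_exp_mul_complex hcne]
      have h1' : Complex.exp ((((n:ℂ) - m) * (2 * (Real.pi:ℂ) * Complex.I)) * ((1:ℝ):ℂ)) = 1 := by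
        have he : (((n:ℂ) - m) * (2 * (Real.pi:ℂ) * Complex.I)) * ((1:ℝ):ℂ)
            = (((n:ℤ) - (m:ℤ) : ℤ) : ℂ) * (2 * (Real.pi:ℂ) * Complex.I) := by push_cast; ring
        rw [he, Complex.exp_int_mul_two_pi_mul_I]
      have h0' : Complex.exp ((((n:ℂ) - m) * (2 * (Real.pi:ℂ) * Complex.I)) * ((0:ℝ):ℂ)) = 1 := by
        norm_num
      rw [h1', h0', sub_self, zero_div, mul_zero]
  -- collapse to the diagonal
  rw [funext hterm] at key
  set w : ℕ → ℂ := fun n => ((n + K).choose K : ℂ) ^ 2 * ((a : ℂ) ^ 2) ^ n with hw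
  have hkey2 : HasSum w (∫ θ in Set.Ioc (0:ℝ) 1, ∑' p : ℕ × ℕ, F p θ) := by
    refine (hasSum_iff_hasSum_of_ne_zero_bij
      (f := fun p : ℕ × ℕ => if p.1 = p.2 then ((p.1 + K).choose K : ℂ) ^ 2 * ((a : ℂ) ^ 2) ^ p.1 else 0)
      (g := w) (fun n => ((n.1, n.1) : ℕ × ℕ)) ?_ ?_ ?_).mp key
    · intro p q h
      exact Subtype.ext (Prod.ext_iff.mp h).1
    · intro p hp
      simp only [Function.mem_support] at hp
      by_cases h : p.1 = p.2
      · refine ⟨⟨p.1, ?_⟩, ?_⟩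
        · simp only [Function.mem_support, hw]
          rw [if_pos h] at hp
          exact hp
        · show (p.1, p.1) = p
          exact Prod.ext rfl h
      · rw [if_neg h] at hp; exact absurd rfl hp
    · intro x
      simp [hw]
  -- identify the sum with the closed form
  have hrC : HasSum w
      ((((∑ m ∈ range (K + 1), ((K.choose m : ℝ)) ^ 2 * (a ^ 2) ^ m) /
        (1 - a ^ 2) ^ (2 * K + 1) : ℝ)) : ℂ) := by
    have hr := hasSum_rhs K (a ^ 2) hx0 hx1
    have := Complex.hasSum_ofReal.mpr hr
    refine this.congr_fun fun n => ?_
    simp only [hw]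
    push_cast
    ring
  have hval := hkey2.unique hrC
  rw [intervalIntegral.integral_of_le zero_le_one]
  simp only [hE, hE'] at hpt
  simp only [hpt]
  exact hval

/-- **Evaluation of the local factor at the central point:**
`∫_0^1 (1−√x e(θ))^{−k}(1−√x e(−θ))^{−k} dθ = (1−x)^{1−2k} ∑_{m=0}^{k−1} C(k−1,m)² x^m`,
the `p`-local identity underlying the arithmetic constant `a_k`. -/
theorem local_factor_central_value (k : ℕ) (hk : 0 < k) (x : ℝ) (hx0 : 0 ≤ x) (hx1 : x < 1) :
    (∫ θ in (0:ℝ)..1,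
        (1 - (Real.sqrt x : ℂ) * Complex.exp (2 * Real.pi * Complex.I * θ)) ^ (-(k : ℤ)) *
          (1 - (Real.sqrt x : ℂ) * Complex.exp (-(2 * Real.pi * Complex.I * θ))) ^ (-(k : ℤ)))
      = (((1 - x) ^ ((1 : ℤ) - 2 * k) *
          ∑ m ∈ Finset.range k, ((k - 1).choose m : ℝ) ^ 2 * x ^ m : ℝ) : ℂ) ∧
    (∫ θ in (0:ℝ)..1,
        (‖1 - (Real.sqrt x : ℂ) *
          Complex.exp (2 * Real.pi * Complex.I * θ)‖) ^ (-(2 * k : ℤ)))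
      = (1 - x) ^ ((1 : ℤ) - 2 * k) *
          ∑ m ∈ Finset.range k, ((k - 1).choose m : ℝ) ^ 2 * x ^ m := by
  obtain ⟨K, rfl⟩ : ∃ K, k = K + 1 := ⟨k - 1, by omega⟩
  have ha0 : 0 ≤ Real.sqrt x := Real.sqrt_nonneg x
  have ha1 : Real.sqrt x < 1 := by
    nlinarith [Real.sq_sqrt hx0, Real.sqrt_nonneg x]
  have hax : Real.sqrt x ^ 2 = x := Real.sq_sqrt hx0
  -- the real right-hand side in two forms
  have hKsub : K + 1 - 1 = K := by omega
  have hzp : (1 - x) ^ ((1 : ℤ) - 2 * ((K + 1 : ℕ) : ℤ)) = ((1 - x) ^ (2 * K + 1))⁻¹ := by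
    rw [show (1 : ℤ) - 2 * ((K + 1 : ℕ) : ℤ) = -((2 * K + 1 : ℕ) : ℤ) by push_cast; ring,
      zpow_neg, zpow_natCast]
  have hRHS : ((1 - x) ^ ((1 : ℤ) - 2 * ((K + 1 : ℕ) : ℤ)) *
        ∑ m ∈ Finset.range (K + 1), ((K + 1 - 1).choose m : ℝ) ^ 2 * x ^ m)
      = (∑ m ∈ range (K + 1), ((K.choose m : ℝ)) ^ 2 * x ^ m) /
          (1 - x) ^ (2 * K + 1) := by
    rw [hKsub, hzp, div_eq_mul_inv, mul_comm]
  have hmain := main_complex K (Real.sqrt x) ha0 ha1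
  rw [hax] at hmain
  constructor
  · rw [hmain]
    exact congrArg Complex.ofReal hRHS.symm
  · -- reduce to the first component
    have hzne : ∀ θ : ℝ, (1 - (Real.sqrt x : ℂ) * Complex.exp (2 * Real.pi * Complex.I * θ)) ≠ 0 := by
      intro θ h
      have h1 : (Real.sqrt x : ℂ) * Complex.exp (2 * Real.pi * Complex.I * θ) = 1 := by
        have := sub_eq_zero.mp h; exact this.symm
      have habs := congrArg norm h1
      rw [norm_mul, Complex.norm_real, Real.norm_eq_abs, abs_of_nonneg ha0, abs_exp_I_mul θ, mul_one,
        norm_one] at habs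
      exact absurd habs (ne_of_lt ha1)
    have hptreal : ∀ θ : ℝ,
        (((‖1 - (Real.sqrt x : ℂ) * Complex.exp (2 * Real.pi * Complex.I * θ)‖)
            ^ (-(2 * ((K + 1 : ℕ) : ℤ))) : ℝ) : ℂ)
        = (1 - (Real.sqrt x : ℂ) * Complex.exp (2 * Real.pi * Complex.I * θ)) ^ (-((K + 1 : ℕ) : ℤ)) *
          (1 - (Real.sqrt x : ℂ) * Complex.exp (-(2 * Real.pi * Complex.I * θ))) ^ (-((K + 1 : ℕ) : ℤ)) := by
      intro θ
      set z : ℂ := 1 - (Real.sqrt x : ℂ) * Complex.exp (2 * Real.pi * Complex.I * θ) with hzdef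
      have hz : z ≠ 0 := hzne θ
      have hconj : (1 - (Real.sqrt x : ℂ) * Complex.exp (-(2 * Real.pi * Complex.I * θ)))
          = (starRingEnd ℂ) z := by
        have hcexp : (starRingEnd ℂ) (2 * (Real.pi : ℂ) * Complex.I * θ)
            = -(2 * (Real.pi : ℂ) * Complex.I * θ) := by
          rw [map_mul, map_mul, map_mul, Complex.conj_I, Complex.conj_ofReal,
            Complex.conj_ofReal, map_ofNat]
          ring
        rw [hzdef, map_sub, map_one, map_mul, Complex.conj_ofReal, ← Complex.exp_conj, hcexp]
      rw [hconj, ← mul_zpow, Complex.mul_conj, Complex.normSq_eq_norm_sq]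
      rw [Complex.ofReal_zpow]
      rw [Complex.ofReal_pow, ← zpow_natCast ((‖z‖ : ℂ)) 2, ← zpow_mul,
        show ((2:ℕ):ℤ) * -((K + 1 : ℕ):ℤ) = -(2 * ((K + 1 : ℕ):ℤ)) by push_cast; ring]
    have hcast : ((∫ θ in (0:ℝ)..1,
        (‖1 - (Real.sqrt x : ℂ) * Complex.exp (2 * Real.pi * Complex.I * θ)‖)
          ^ (-(2 * ((K + 1 : ℕ) : ℤ))) : ℝ) : ℂ)
        = ∫ θ in (0:ℝ)..1,
            (1 - (Real.sqrt x : ℂ) * Complex.exp (2 * Real.pi * Complex.I * θ)) ^ (-((K + 1 : ℕ) : ℤ)) *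
            (1 - (Real.sqrt x : ℂ) * Complex.exp (-(2 * Real.pi * Complex.I * θ))) ^ (-((K + 1 : ℕ) : ℤ)) := by
      rw [← intervalIntegral.integral_ofReal]
      exact intervalIntegral.integral_congr fun θ _ => hptreal θ
    rw [hmain] at hcast
    have := Complex.ofReal_inj.mp hcast
    rw [this, hRHS]
end

section
/- Let k be a positive integer and let M be the k×k matrix whose (i,j) entry, for 1 ≤ i, j ≤ k, is the binomial coefficient C(2k−i, j−1). Then det M = (−1)^{k(k−1)/2}. -/
/-!
Reversing the order of the rows turns the matrix into `(C(k + i, j))_{0 ≤ i, j < k}`, and the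
reversal of `k` rows has sign `(-1)^C(k, 2)`. By Vandermonde's identity
`C(n + i, j) = ∑ₘ C(i, m) C(n, j - m)`, the matrix `(C(n + i, j))` is the product of the lower
unitriangular Pascal matrix `(C(i, m))` and the upper unitriangular Toeplitz matrix
`(C(n, j - m))_{m ≤ j}`, so its determinant is `1`.
-/

open Finset Matrix

theorem Fin.sign_revPerm :
    ∀ n : ℕ, Equiv.Perm.sign (Fin.revPerm : Equiv.Perm (Fin n)) = (-1) ^ n.choose 2
  | 0 => rfl
  | n + 1 => by
    -- reverse the first `n` entries, then rotate the last one to the front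
    have hdecomp : (Fin.revPerm : Equiv.Perm (Fin (n + 1))) = finRotate (n + 1) *
        finSuccEquivLast.symm.permCongr (Fin.revPerm : Equiv.Perm (Fin n)).optionCongr := by
      ext i
      refine Fin.lastCases ?_ (fun j => ?_) i
      · simp [Equiv.permCongr_apply]
      · simp [Equiv.permCongr_apply, Fin.rev_castSucc, Fin.coeSucc_eq_succ]
    rw [hdecomp, map_mul, sign_finRotate, Equiv.Perm.sign_permCongr, Equiv.optionCongr_sign,
      Fin.sign_revPerm n, ← pow_add, Nat.choose_succ_succ', Nat.choose_one_right,
      Nat.add_sub_cancel, add_comm]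

variable {R : Type*} [CommRing R]

theorem Matrix.det_of_choose (k : ℕ) :
    det (of fun i j : Fin k => ((i : ℕ).choose j : R)) = 1 := by
  rw [det_of_isLowerTriangular _ fun i j (hij : i < j) => by
    simp [Nat.choose_eq_zero_of_lt (show (i : ℕ) < j from hij)]]
  simp

theorem Matrix.det_of_choose_sub (n k : ℕ) :
    det (of fun i j : Fin k => if i ≤ j then (n.choose (j - i) : R) else 0) = 1 := by
  rw [det_of_isUpperTriangular fun i j (hij : j < i) => by simp [not_le.mpr hij]]
  simp

theorem Matrix.of_choose_add_eq_mul (n k : ℕ) :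
    (of fun i j : Fin k => ((n + i).choose j : R)) =
      (of fun i j : Fin k => ((i : ℕ).choose j : R)) *
        of fun i j : Fin k => if i ≤ j then (n.choose (j - i) : R) else 0 := by
  ext i j
  have hj : range (j + 1) ⊆ range k := range_subset_range.mpr j.isLt
  have vandermonde : ((n + i).choose j : R) =
      ∑ m ∈ range (j + 1), (i.1.choose m * n.choose (j - m) : R) := by
    rw [add_comm, Nat.add_choose_eq, Nat.sum_antidiagonal_eq_sum_range_succ_mk]
    push_cast
    rfl
  simp only [mul_apply, of_apply, Fin.le_iff_val_le_val]
  rw [vandermonde, Fin.sum_univ_eq_sum_range (fun m => (i.1.choose m : R) *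
    if m ≤ j then (n.choose (j - m) : R) else 0), ← sum_subset hj fun m _ hm => by
      simp [show ¬ m ≤ j by simpa using hm]]
  refine sum_congr rfl fun m hm => ?_
  simp [show m ≤ j by simpa [Nat.lt_succ_iff] using hm]

theorem Matrix.det_of_choose_add (n k : ℕ) :
    det (of fun i j : Fin k => ((n + i).choose j : R)) = 1 := by
  rw [of_choose_add_eq_mul, det_mul, det_of_choose, det_of_choose_sub, one_mul]

theorem binomial_matrix_det_general (k : ℕ) :
    Matrix.det (Matrix.of fun i j : Fin k =>
        ((Nat.choose (2 * k - 1 - (i : ℕ)) (j : ℕ) : ℤ)))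
      = (-1) ^ (k * (k - 1) / 2) := by
  have hrev : (of fun i j : Fin k => ((2 * k - 1 - i).choose j : ℤ)) =
      (of fun i j : Fin k => ((k + i).choose j : ℤ)).submatrix Fin.revPerm id := by
    ext i j
    simp only [of_apply, submatrix_apply, Fin.revPerm_apply, Fin.val_rev, id]
    congr 2
    omega
  rw [hrev, det_permute, det_of_choose_add, mul_one, Fin.sign_revPerm, ← Nat.choose_two_right]
  simp

/-- **Binomial determinant evaluation:** the `k×k` matrix with `(i,j)` entry
`C(2k−i, j−1)` (for `1 ≤ i,j ≤ k`) has determinant `(−1)^{k(k−1)/2}`. -/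
theorem binomial_matrix_det (k : ℕ) (hk : 0 < k) :
    Matrix.det (Matrix.of fun i j : Fin k =>
        ((Nat.choose (2 * k - 1 - (i : ℕ)) (j : ℕ) : ℤ)))
      = (-1) ^ (k * (k - 1) / 2) :=
  binomial_matrix_det_general k
end
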